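/- arXiv:2503.04612 — 9 statements merged into one kernel-verified Lean document; each statement's English description precedes it below -/
import Mathlib

section
/- Let (X_n)_{n≥0} be i.i.d. nonnegative random variables with finite mean, and define Y := sup_{n≥0} (X_n - n). Then Y is integrable if and only if X_0 has finite second moment, i.e., E[X_0^2] < ∞. -/
/-!
With `φ x = ∑ₙ (x - n)⁺` one has `x² / 2 ≤ φ x ≤ x² + x` for `x ≥ 0`, so, as `E[X₀] < ∞`, the
second moment of `X₀` is finite iff `E[φ(X₀)] = ∑ₙ E[(Xₙ - n)⁺]` is, and `Y ≤ ∑ₙ (Xₙ - n)⁺` gives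
one direction. Conversely, for `t ≥ 0` let `s = ∑ₙ P(X₀ > n + t) ≤ S = ∑ₙ P(X₀ > n) < ∞`.
By independence `P(Y > t) ≥ 1 - ∏ₙ (1 - P(Xₙ > n + t)) ≥ 1 - e⁻ˢ ≥ s / (1 + s)`, so
`s ≤ (1 + S) P(Y > t)`, and integrating in `t` (layer cake) gives `E[φ(X₀)] ≤ (1 + S) E[Y]`.
-/

open MeasureTheory ProbabilityTheory Set Filter
open scoped ENNReal

lemma sum_range_sub_natCast (x : ℝ) (k : ℕ) :
    ∑ n ∈ Finset.range k, (x - n) = k * x - k * (k - 1) / 2 := by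
  induction k with
  | zero => simp
  | succ k ih => rw [Finset.sum_range_succ, ih]; push_cast; ring

lemma tsum_ofReal_sub_natCast (x : ℝ) (hx : 0 ≤ x) :
    ∑' n : ℕ, ENNReal.ofReal (x - n) =
      ENNReal.ofReal ((⌊x⌋₊ + 1) * x - (⌊x⌋₊ + 1) * ⌊x⌋₊ / 2) := by
  have hfloor : (⌊x⌋₊ : ℝ) ≤ x := Nat.floor_le hx
  rw [tsum_eq_sum (s := Finset.range (⌊x⌋₊ + 1)), ← ENNReal.ofReal_sum_of_nonneg,
    sum_range_sub_natCast]
  · push_cast; ring_nf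
  · intro n hn
    have : (n : ℝ) ≤ ⌊x⌋₊ := by exact_mod_cast Nat.lt_succ_iff.1 (Finset.mem_range.1 hn)
    linarith
  · intro n hn
    have : x < n := Nat.lt_of_floor_lt (by simpa [Nat.lt_succ_iff] using hn)
    exact ENNReal.ofReal_of_nonpos (by linarith)

lemma ofReal_sq_le_two_mul_tsum_ofReal_sub_natCast (x : ℝ) (hx : 0 ≤ x) :
    ENNReal.ofReal (x ^ 2) ≤ 2 * ∑' n : ℕ, ENNReal.ofReal (x - n) := by
  have hfloor : (⌊x⌋₊ : ℝ) ≤ x := Nat.floor_le hx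
  have hlt : x < ⌊x⌋₊ + 1 := Nat.lt_floor_add_one x
  rw [tsum_ofReal_sub_natCast x hx, ← ENNReal.ofReal_ofNat 2, ← ENNReal.ofReal_mul zero_le_two]
  exact ENNReal.ofReal_le_ofReal (by nlinarith)

lemma tsum_ofReal_sub_natCast_le (x : ℝ) (hx : 0 ≤ x) :
    ∑' n : ℕ, ENNReal.ofReal (x - n) ≤ ENNReal.ofReal (x ^ 2) + ENNReal.ofReal x := by
  have hfloor : (⌊x⌋₊ : ℝ) ≤ x := Nat.floor_le hx
  rw [tsum_ofReal_sub_natCast x hx, ← ENNReal.ofReal_add (sq_nonneg x) hx]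
  exact ENNReal.ofReal_le_ofReal (by nlinarith)

lemma ofReal_iSup_le_tsum_ofReal {ι : Type*} (f : ι → ℝ) :
    ENNReal.ofReal (⨆ i, f i) ≤ ∑' i, ENNReal.ofReal (f i) := by
  set S := ∑' i, ENNReal.ofReal (f i)
  rcases eq_or_ne S ∞ with hS | hS
  · rw [hS]; exact le_top
  refine ENNReal.ofReal_le_of_le_toReal (Real.iSup_le (fun i => ?_) ENNReal.toReal_nonneg)
  calc f i ≤ (ENNReal.ofReal (f i)).toReal := by
        rw [ENNReal.toReal_ofReal']; exact le_max_left _ _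
    _ ≤ S.toReal := ENNReal.toReal_mono hS (ENNReal.le_tsum i)

lemma sum_le_one_add_sum_mul_one_sub_prod_one_sub {ι : Type*} (F : Finset ι) {q : ι → ℝ}
    (hq0 : ∀ i ∈ F, 0 ≤ q i) (hq1 : ∀ i ∈ F, q i ≤ 1) :
    ∑ i ∈ F, q i ≤ (1 + ∑ i ∈ F, q i) * (1 - ∏ i ∈ F, (1 - q i)) := by
  set s := ∑ i ∈ F, q i
  have hs : 0 ≤ s := Finset.sum_nonneg hq0
  have hprod : ∏ i ∈ F, (1 - q i) ≤ Real.exp (-s) := by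
    rw [← Finset.sum_neg_distrib, Real.exp_sum]
    exact Finset.prod_le_prod (fun i hi => sub_nonneg.2 (hq1 i hi))
      fun i _ => Real.one_sub_le_exp_neg (q i)
  have hexp : (1 + s) * Real.exp (-s) ≤ 1 := by
    rw [Real.exp_neg, ← div_eq_mul_inv, div_le_one (Real.exp_pos s)]
    linarith [Real.add_one_le_exp s]
  nlinarith

lemma ProbabilityTheory.iIndepSet.sum_measure_le_mul_measure_biUnion {Ω ι : Type*}
    [MeasurableSpace Ω] {μ : Measure Ω} {A : ι → Set Ω} (hA : iIndepSet A μ)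
    (hAm : ∀ i, MeasurableSet (A i)) (F : Finset ι) :
    ∑ i ∈ F, μ (A i) ≤ (1 + ∑ i ∈ F, μ (A i)) * μ (⋃ i ∈ F, A i) := by
  have := hA.isProbabilityMeasure
  have hinter : μ.real (⋂ i ∈ F, (A i)ᶜ) = ∏ i ∈ F, (1 - μ.real (A i)) := by
    rw [measureReal_def, ((iIndepSet_iff_iIndep _ _).1 hA).meas_biInter
      (fun i _ => (MeasurableSpace.measurableSet_generateFrom (mem_singleton _)).compl),
      ENNReal.toReal_prod]
    exact Finset.prod_congr rfl fun i _ => probReal_compl_eq_one_sub (hAm i)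
  have hunion : μ.real (⋃ i ∈ F, A i) = 1 - ∏ i ∈ F, (1 - μ.real (A i)) := by
    rw [← hinter, ← compl_iUnion₂, probReal_compl_eq_one_sub
      (F.measurableSet_biUnion fun i _ => hAm i), sub_sub_cancel]
  have key := sum_le_one_add_sum_mul_one_sub_prod_one_sub F (q := fun i => μ.real (A i))
    (fun i _ => measureReal_nonneg) (fun i _ => measureReal_le_one)
  have hsum : ∑ i ∈ F, μ (A i) ≠ ∞ := ENNReal.sum_ne_top.2 fun i _ => measure_ne_top μ _
  rw [← ENNReal.toReal_le_toReal hsum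
    (ENNReal.mul_ne_top (ENNReal.add_ne_top.2 ⟨ENNReal.one_ne_top, hsum⟩) (measure_ne_top μ _))]
  simpa [ENNReal.toReal_mul, ENNReal.toReal_add, ENNReal.toReal_sum, ← measureReal_def,
    hunion] using key

section IID

variable {Ω : Type*} [MeasurableSpace Ω] {μ : Measure Ω}

lemma lintegral_ofReal_iSup_le_tsum {ι : Type*} [Countable ι] {f : ι → Ω → ℝ}
    (hf : ∀ i, AEMeasurable (f i) μ) :
    ∫⁻ ω, ENNReal.ofReal (⨆ i, f i ω) ∂μ ≤ ∑' i, ∫⁻ ω, ENNReal.ofReal (f i ω) ∂μ := by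
  rw [← lintegral_tsum fun i => (hf i).ennreal_ofReal]
  exact lintegral_mono fun ω => ofReal_iSup_le_tsum_ofReal _

lemma lintegral_ofReal_sub_eq_lintegral_meas_lt {f : Ω → ℝ} (hf : AEMeasurable f μ) (c : ℝ) :
    ∫⁻ ω, ENNReal.ofReal (f ω - c) ∂μ = ∫⁻ t in Ioi 0, μ {ω | c + t < f ω} := by
  have hmax : ∀ ω, ENNReal.ofReal (f ω - c) = ENNReal.ofReal (max (f ω - c) 0) := fun ω => by
    rw [ENNReal.ofReal_max, ENNReal.ofReal_zero, max_zero]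
  simp_rw [hmax]
  rw [lintegral_eq_lintegral_meas_lt (f := fun ω => max (f ω - c) 0) μ
    (ae_of_all _ fun ω => le_max_right _ _) ((hf.sub_const c).max aemeasurable_const)]
  refine setLIntegral_congr_fun measurableSet_Ioi fun t ht => ?_
  congr 1
  ext ω
  simp only [mem_ofPred_eq, lt_max_iff, not_lt_of_gt (mem_Ioi.1 ht), or_false]
  constructor <;> intro h <;> linarith

lemma lintegral_ofReal_sq_ne_top_iff {f : Ω → ℝ} (hf : Measurable f) (hpos : ∀ ω, 0 ≤ f ω)
    (hint : ∫⁻ ω, ENNReal.ofReal (f ω) ∂μ ≠ ∞) :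
    ∫⁻ ω, ENNReal.ofReal (f ω ^ 2) ∂μ ≠ ∞ ↔
      ∫⁻ ω, ∑' n : ℕ, ENNReal.ofReal (f ω - n) ∂μ ≠ ∞ := by
  constructor
  · intro hsq
    refine ne_top_of_le_ne_top ?_ (lintegral_mono fun ω => tsum_ofReal_sub_natCast_le _ (hpos ω))
    rw [lintegral_add_left (hf.pow_const 2).ennreal_ofReal]
    exact ENNReal.add_ne_top.2 ⟨hsq, hint⟩
  · intro htsum
    refine ne_top_of_le_ne_top ?_
      (lintegral_mono fun ω => ofReal_sq_le_two_mul_tsum_ofReal_sub_natCast _ (hpos ω))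
    rw [lintegral_const_mul' _ _ ENNReal.ofNat_ne_top]
    exact ENNReal.mul_ne_top ENNReal.ofNat_ne_top htsum

variable {X : ℕ → Ω → ℝ}

lemma tsum_lintegral_ofReal_sub_natCast (hident : ∀ n, IdentDistrib (X n) (X 0) μ μ)
    (hmeas : Measurable (X 0)) :
    ∑' n : ℕ, ∫⁻ ω, ENNReal.ofReal (X n ω - n) ∂μ =
      ∫⁻ ω, ∑' n : ℕ, ENNReal.ofReal (X 0 ω - n) ∂μ := by
  rw [lintegral_tsum fun n => ((hmeas.sub_const _).ennreal_ofReal).aemeasurable]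
  exact tsum_congr fun n =>
    ((hident n).comp (measurable_id.sub_const (n : ℝ)).ennreal_ofReal).lintegral_eq

lemma tsum_measure_add_lt_le (hmeas : ∀ n, Measurable (X n)) (hindep : iIndepFun X μ)
    (hident : ∀ n, IdentDistrib (X n) (X 0) μ μ)
    (hbdd : ∀ᵐ ω ∂μ, BddAbove (range fun n : ℕ => X n ω - n)) {t : ℝ} (ht : 0 ≤ t) :
    ∑' n : ℕ, μ {ω | n + t < X 0 ω} ≤
      (1 + ∑' n : ℕ, μ {ω | (n : ℝ) < X 0 ω}) * μ {ω | t < ⨆ n : ℕ, (X n ω - n)} := by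
  set A : ℕ → Set Ω := fun n => X n ⁻¹' Ioi (n + t)
  have hA : iIndepSet A μ := (iIndepSet_iff_iIndep _ _).2 <|
    iIndep_of_iIndep_of_le hindep.iIndep fun n => MeasurableSpace.generateFrom_le <| by
      rintro _ rfl
      exact ⟨Ioi _, measurableSet_Ioi, rfl⟩
  have hμA : ∀ n, μ (A n) = μ {ω | n + t < X 0 ω} :=
    fun n => (hident n).measure_mem_eq measurableSet_Ioi
  have hμA_le : ∀ n, μ (A n) ≤ μ {ω | (n : ℝ) < X 0 ω} := fun n =>
    (hμA n).trans_le <| measure_mono fun ω (hω : n + t < X 0 ω) =>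
      show (n : ℝ) < X 0 ω by linarith
  -- `hbdd` is needed here: the real `⨆` of an unbounded family is `0`.
  have hunion : ∀ F : Finset ℕ, μ (⋃ n ∈ F, A n) ≤ μ {ω | t < ⨆ n : ℕ, (X n ω - n)} :=
    fun F => measure_mono_ae <| hbdd.mono fun ω hb hω => by
      obtain ⟨n, -, hn : n + t < X n ω⟩ := mem_iUnion₂.1 hω
      exact (lt_sub_iff_add_lt'.2 hn).trans_le (le_ciSup hb n)
  rw [ENNReal.tsum_eq_iSup_sum]
  refine iSup_le fun F => ?_
  simp_rw [← hμA]
  calc ∑ n ∈ F, μ (A n) ≤ (1 + ∑ n ∈ F, μ (A n)) * μ (⋃ n ∈ F, A n) :=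
        hA.sum_measure_le_mul_measure_biUnion (fun n => hmeas n measurableSet_Ioi) F
    _ ≤ _ := by
        refine mul_le_mul' ?_ (hunion F)
        gcongr
        exact (Finset.sum_le_sum fun n _ => hμA_le n).trans (ENNReal.sum_le_tsum F)

lemma lintegral_tsum_ofReal_sub_natCast_le (hmeas : ∀ n, Measurable (X n))
    (hindep : iIndepFun X μ) (hident : ∀ n, IdentDistrib (X n) (X 0) μ μ)
    (hbdd : ∀ᵐ ω ∂μ, BddAbove (range fun n : ℕ => X n ω - n))
    (hY : ∀ ω, 0 ≤ ⨆ n : ℕ, (X n ω - n)) :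
    ∫⁻ ω, ∑' n : ℕ, ENNReal.ofReal (X 0 ω - n) ∂μ ≤
      (1 + ∑' n : ℕ, μ {ω | (n : ℝ) < X 0 ω}) *
        ∫⁻ ω, ENNReal.ofReal (⨆ n : ℕ, (X n ω - n)) ∂μ := by
  have hYmeas : Measurable fun ω => ⨆ n : ℕ, (X n ω - n) :=
    Measurable.iSup fun n => (hmeas n).sub_const _
  calc ∫⁻ ω, ∑' n : ℕ, ENNReal.ofReal (X 0 ω - n) ∂μ
      = ∑' n : ℕ, ∫⁻ t in Ioi 0, μ {ω | n + t < X 0 ω} := by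
        rw [lintegral_tsum fun n => ((hmeas 0).sub_const _).ennreal_ofReal.aemeasurable]
        simp_rw [lintegral_ofReal_sub_eq_lintegral_meas_lt (hmeas 0).aemeasurable]
    _ = ∫⁻ t in Ioi 0, ∑' n : ℕ, μ {ω | n + t < X 0 ω} := by
        refine (lintegral_tsum fun n =>
          (Antitone.measurable fun t t' htt' => ?_).aemeasurable).symm
        exact measure_mono fun ω (h : n + t' < X 0 ω) => show n + t < X 0 ω by linarith
    _ ≤ ∫⁻ t in Ioi 0, (1 + ∑' n : ℕ, μ {ω | (n : ℝ) < X 0 ω}) *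
          μ {ω | t < ⨆ n : ℕ, (X n ω - n)} :=
        setLIntegral_mono' measurableSet_Ioi fun t ht =>
          tsum_measure_add_lt_le hmeas hindep hident hbdd (le_of_lt ht)
    _ = _ := by
        rw [lintegral_const_mul _ (f := fun t => μ {ω | t < ⨆ n : ℕ, (X n ω - n)})
          (Antitone.measurable fun t t' htt' => measure_mono fun ω h => htt'.trans_lt h),
          lintegral_eq_lintegral_meas_lt μ (ae_of_all _ hY) hYmeas.aemeasurable]

variable [IsProbabilityMeasure μ]

lemma tsum_measure_natCast_lt_ne_top {f : Ω → ℝ} (hint : Integrable f μ) (hpos : 0 ≤ f) :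
    ∑' n : ℕ, μ {ω | (n : ℝ) < f ω} ≠ ∞ :=
  -- the library states this for the ambient measure `ℙ = volume`
  (@tsum_prob_mem_Ioi_lt_top Ω ⟨μ⟩ _ _ hint hpos).ne

lemma ae_bddAbove_range_sub_natCast (hident : ∀ n, IdentDistrib (X n) (X 0) μ μ)
    (hint : Integrable (X 0) μ) (hpos : 0 ≤ X 0) :
    ∀ᵐ ω ∂μ, BddAbove (range fun n : ℕ => X n ω - n) := by
  have hsum : ∑' n : ℕ, μ (X n ⁻¹' Ioi (n : ℝ)) ≠ ∞ := by
    rw [tsum_congr fun n => (hident n).measure_mem_eq measurableSet_Ioi]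
    exact tsum_measure_natCast_lt_ne_top hint hpos
  filter_upwards [ae_eventually_notMem hsum] with ω hω
  refine IsBoundedUnder.bddAbove_range (isBoundedUnder_of_eventually_le (a := 0) ?_)
  filter_upwards [hω] with n hn
  simpa using hn

end IID

/-- For i.i.d. nonnegative random variables `Xₙ` with finite mean,
`Y := sup_{n≥0} (Xₙ - n)` is integrable iff `X₀` has finite second moment. -/
theorem integrable_iSup_sub_iff_secondMoment {Ω : Type*} [MeasurableSpace Ω]
    (μ : Measure Ω) [IsProbabilityMeasure μ] (X : ℕ → Ω → ℝ)
    (hmeas : ∀ n, Measurable (X n))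
    (hindep : iIndepFun X μ)
    (hident : ∀ n, μ.map (X n) = μ.map (X 0))
    (hpos : ∀ n ω, 0 ≤ X n ω)
    (hint : Integrable (X 0) μ) :
    Integrable (fun ω => ⨆ n : ℕ, (X n ω - n)) μ ↔
      Integrable (fun ω => (X 0 ω) ^ 2) μ := by
  have hid : ∀ n, IdentDistrib (X n) (X 0) μ μ :=
    fun n => ⟨(hmeas n).aemeasurable, (hmeas 0).aemeasurable, hident n⟩
  have hY : ∀ ω, 0 ≤ ⨆ n : ℕ, (X n ω - n) :=
    fun ω => Real.iSup_nonneg' ⟨0, by simpa using hpos 0 ω⟩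
  rw [← lintegral_ofReal_ne_top_iff_integrable
      (Measurable.iSup fun n => (hmeas n).sub_const _).aestronglyMeasurable (ae_of_all _ hY),
    ← lintegral_ofReal_ne_top_iff_integrable ((hmeas 0).pow_const 2).aestronglyMeasurable
      (ae_of_all _ fun ω => sq_nonneg _),
    lintegral_ofReal_sq_ne_top_iff (hmeas 0) (hpos 0)
      ((lintegral_ofReal_ne_top_iff_integrable hint.1 (ae_of_all _ (hpos 0))).2 hint)]
  constructor
  · intro hYfin
    refine ne_top_of_le_ne_top (ENNReal.mul_ne_top ?_ hYfin)
      (lintegral_tsum_ofReal_sub_natCast_le hmeas hindep hid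
        (ae_bddAbove_range_sub_natCast hid hint (hpos 0)) hY)
    exact ENNReal.add_ne_top.2 ⟨ENNReal.one_ne_top, tsum_measure_natCast_lt_ne_top hint (hpos 0)⟩
  · intro htsum
    refine ne_top_of_le_ne_top htsum ?_
    rw [← tsum_lintegral_ofReal_sub_natCast hid (hmeas 0)]
    exact lintegral_ofReal_iSup_le_tsum fun n => ((hmeas n).sub_const _).aemeasurable
end

section
/- Let (X_n)_{n≥0} be i.i.d. nonnegative random variables with E[X_0] ≤ C < ∞, let a_j := P[X_0 ≥ j] and b_k := P[sup_{n≥0}(X_n - n) ≥ k]. Then for every k ≥ 1, (1/(1+C)) ∑_{j≥k} a_j ≤ b_k ≤ ∑_{j≥k} a_j. -/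
/-!
Put `A n = {k + n ≤ X n}`. Since `∑ P[X₀ > n] < ∞`, Borel–Cantelli shows that almost surely only
finitely many `X n - n` are positive, so the supremum is attained whenever it is at least `k ≥ 1`;
hence `b_k = P[⋃ A n]`, and `P[A n] = a_{k+n}`. The upper bound is the union bound. For the lower
bound, independence gives `P[⋃ A n] = 1 - ∏ (1 - a_{k+n}) ≥ 1 - exp (-S) ≥ S / (1 + S)` with
`S = ∑_{j ≥ k} a_j`, and `S ≤ E[⌊X₀⌋] ≤ C`.
-/

open MeasureTheory ProbabilityTheory Set
open scoped ENNReal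

theorem tsum_indicator_natCast_succ_le_ofReal (x : ℝ) :
    ∑' n : ℕ, {y : ℝ | ((n + 1 : ℕ) : ℝ) ≤ y}.indicator (1 : ℝ → ℝ≥0∞) x
      ≤ ENNReal.ofReal x := by
  have hvanish : ∀ n ∉ Finset.range ⌊x⌋₊,
      {y : ℝ | ((n + 1 : ℕ) : ℝ) ≤ y}.indicator (1 : ℝ → ℝ≥0∞) x = 0 :=
    fun n hn => indicator_of_notMem (fun hx => hn (Finset.mem_range.2 (Nat.le_floor hx))) _
  rw [tsum_eq_sum hvanish]
  calc ∑ n ∈ Finset.range ⌊x⌋₊, {y : ℝ | ((n + 1 : ℕ) : ℝ) ≤ y}.indicator (1 : ℝ → ℝ≥0∞) x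
      ≤ ∑ _n ∈ Finset.range ⌊x⌋₊, (1 : ℝ≥0∞) :=
        Finset.sum_le_sum fun n _ => indicator_le_self' (fun _ _ => zero_le_one) x
    _ = ENNReal.ofReal ⌊x⌋₊ := by simp
    _ ≤ ENNReal.ofReal x := by
        rcases le_total 0 x with hx | hx
        · exact ENNReal.ofReal_le_ofReal (Nat.floor_le hx)
        · simp [Nat.floor_of_nonpos hx]

section LayerCake

variable {Ω : Type*} [MeasurableSpace Ω] {μ : Measure Ω} {f : Ω → ℝ}

theorem tsum_measure_natCast_succ_le_le_lintegral (hf : AEMeasurable f μ) :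
    ∑' n : ℕ, μ {ω | ((n + 1 : ℕ) : ℝ) ≤ f ω} ≤ ∫⁻ ω, ENNReal.ofReal (f ω) ∂μ := by
  have hmeas : ∀ n : ℕ, MeasurableSet {y : ℝ | ((n + 1 : ℕ) : ℝ) ≤ y} :=
    fun _ => measurableSet_Ici
  calc ∑' n : ℕ, μ {ω | ((n + 1 : ℕ) : ℝ) ≤ f ω}
      = ∑' n : ℕ, ∫⁻ ω, {y : ℝ | ((n + 1 : ℕ) : ℝ) ≤ y}.indicator 1 (f ω) ∂μ :=
        tsum_congr fun n =>
          (lintegral_indicator_one₀ (hf.nullMeasurableSet_preimage (hmeas n))).symm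
    _ = ∫⁻ ω, ∑' n : ℕ, {y : ℝ | ((n + 1 : ℕ) : ℝ) ≤ y}.indicator 1 (f ω) ∂μ :=
        (lintegral_tsum fun n => (measurable_const.indicator (hmeas n)).comp_aemeasurable hf).symm
    _ ≤ ∫⁻ ω, ENNReal.ofReal (f ω) ∂μ :=
        lintegral_mono fun ω => tsum_indicator_natCast_succ_le_ofReal (f ω)

theorem tsum_measure_natCast_add_le_le_ofReal_integral (hint : Integrable f μ)
    (hpos : 0 ≤ᵐ[μ] f) {k : ℕ} (hk : 1 ≤ k) :
    ∑' j : ℕ, μ {ω | (k : ℝ) + j ≤ f ω} ≤ ENNReal.ofReal (∫ ω, f ω ∂μ) := by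
  calc ∑' j : ℕ, μ {ω | (k : ℝ) + j ≤ f ω}
      = ∑' j : ℕ, μ {ω | ((j + (k - 1) + 1 : ℕ) : ℝ) ≤ f ω} := by
        refine tsum_congr fun j => ?_
        rw [show j + (k - 1) + 1 = k + j by omega, Nat.cast_add]
    _ ≤ ∑' n : ℕ, μ {ω | ((n + 1 : ℕ) : ℝ) ≤ f ω} :=
        ENNReal.tsum_comp_le_tsum_of_injective (add_left_injective (k - 1)) _
    _ ≤ ∫⁻ ω, ENNReal.ofReal (f ω) ∂μ := tsum_measure_natCast_succ_le_le_lintegral hint.aemeasurable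
    _ = ENNReal.ofReal (∫ ω, f ω ∂μ) := (ofReal_integral_eq_lintegral_ofReal hint hpos).symm

end LayerCake

theorem le_ciSup_iff_exists_le_of_finite {f : ℕ → ℝ} {b c : ℝ} (hf : {n | b < f n}.Finite)
    (hbc : b < c) : c ≤ ⨆ n, f n ↔ ∃ n, c ≤ f n := by
  have hbdd : BddAbove (range f) := by
    refine ((hf.image f).bddAbove.union (bddAbove_Iic (a := b))).mono ?_
    rintro _ ⟨n, rfl⟩
    by_cases hn : b < f n
    · exact .inl ⟨n, hn, rfl⟩
    · exact .inr (not_lt.1 hn)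
  refine ⟨fun hc => ?_, fun ⟨n, hn⟩ => hn.trans (le_ciSup hbdd n)⟩
  by_contra! hlt
  obtain ⟨m, hmc, hm⟩ : ∃ m < c, ∀ n, f n ≤ m := by
    rcases Set.eq_empty_or_nonempty {n | b < f n} with hempty | hne
    · exact ⟨b, hbc, fun n => not_lt.1 fun h => (hempty ▸ h : n ∈ (∅ : Set ℕ))⟩
    · obtain ⟨n₀, hn₀, hmax⟩ := Set.exists_max_image _ f hf hne
      refine ⟨f n₀, hlt n₀, fun n => ?_⟩
      by_cases hn : b < f n
      · exact hmax n hn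
      · exact (not_lt.1 hn).trans hn₀.le
  exact (hc.trans (ciSup_le hm)).not_gt hmc

section IdentDistrib

variable {Ω : Type*} [MeasurableSpace Ω] {μ : Measure Ω} [IsFiniteMeasure μ] {X : ℕ → Ω → ℝ}

theorem ae_finite_setOf_natCast_lt_of_identDistrib (hident : ∀ n, IdentDistrib (X n) (X 0) μ μ)
    (hint : Integrable (X 0) μ) :
    ∀ᵐ ω ∂μ, {n : ℕ | (n : ℝ) < X n ω}.Finite := by
  have hle (n : ℕ) : μ {ω | (n : ℝ) < X n ω} ≤ μ {ω | (n : ℝ) ≤ X 0 ω} := by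
    rw [show {ω | (n : ℝ) < X n ω} = X n ⁻¹' Ioi (n : ℝ) from rfl,
      (hident n).measure_mem_eq measurableSet_Ioi]
    exact measure_mono fun ω (hω : (n : ℝ) < X 0 ω) => hω.le
  have hsum : ∑' n : ℕ, μ {ω | (n : ℝ) ≤ X 0 ω} ≠ ∞ := by
    rw [tsum_eq_zero_add' ENNReal.summable]
    exact ENNReal.add_ne_top.2 ⟨measure_ne_top _ _, ne_top_of_le_ne_top hint.lintegral_lt_top.ne
      (tsum_measure_natCast_succ_le_le_lintegral hint.aemeasurable)⟩
  exact ae_finite_setOfPred_mem (ne_top_of_le_ne_top hsum (ENNReal.tsum_le_tsum hle))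

theorem measure_le_iSup_sub_natCast_eq_measure_iUnion
    (hident : ∀ n, IdentDistrib (X n) (X 0) μ μ) (hint : Integrable (X 0) μ) {c : ℝ}
    (hc : 0 < c) :
    μ {ω | c ≤ ⨆ n : ℕ, (X n ω - n)} = μ (⋃ n : ℕ, {ω | c + n ≤ X n ω}) := by
  refine measure_congr ?_
  filter_upwards [ae_finite_setOf_natCast_lt_of_identDistrib hident hint] with ω hω
  have hfin : {n : ℕ | 0 < X n ω - n}.Finite := by simpa only [sub_pos] using hω
  change (c ≤ ⨆ n : ℕ, (X n ω - n)) = (ω ∈ ⋃ n : ℕ, {ω | c + n ≤ X n ω})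
  rw [eq_iff_iff, le_ciSup_iff_exists_le_of_finite hfin hc, mem_iUnion]
  simp only [mem_ofPred_eq, le_sub_iff_add_le]

end IdentDistrib

theorem measureReal_iUnion_le_tsum {Ω ι : Type*} [MeasurableSpace Ω] [Countable ι]
    {μ : Measure Ω} {A : ι → Set Ω} (h : ∑' i, μ (A i) ≠ ∞) :
    μ.real (⋃ i, A i) ≤ ∑' i, μ.real (A i) := by
  simp only [measureReal_def]
  rw [← ENNReal.tsum_toReal_eq fun i => ne_top_of_le_ne_top h (ENNReal.le_tsum i)]
  exact ENNReal.toReal_mono h (measure_iUnion_le A)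

theorem prod_one_sub_mul_one_add_sum_le_one {ι : Type*} (s : Finset ι) {p : ι → ℝ}
    (hp : ∀ i ∈ s, p i ≤ 1) : (∏ i ∈ s, (1 - p i)) * (1 + ∑ i ∈ s, p i) ≤ 1 := by
  have hprod_nonneg : 0 ≤ ∏ i ∈ s, (1 - p i) :=
    Finset.prod_nonneg fun i hi => sub_nonneg.2 (hp i hi)
  have hprod_le : ∏ i ∈ s, (1 - p i) ≤ Real.exp (-∑ i ∈ s, p i) := by
    rw [← Finset.sum_neg_distrib, Real.exp_sum]
    refine Finset.prod_le_prod (fun i hi => sub_nonneg.2 (hp i hi)) fun i _ => ?_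
    linarith [Real.add_one_le_exp (-p i)]
  rcases le_or_gt 0 (1 + ∑ i ∈ s, p i) with hsum | hsum
  · calc (∏ i ∈ s, (1 - p i)) * (1 + ∑ i ∈ s, p i)
        ≤ Real.exp (-∑ i ∈ s, p i) * Real.exp (∑ i ∈ s, p i) :=
          mul_le_mul hprod_le (by linarith [Real.add_one_le_exp (∑ i ∈ s, p i)]) hsum
            (Real.exp_pos _).le
      _ = 1 := by rw [← Real.exp_add, neg_add_cancel, Real.exp_zero]
  · exact (mul_nonpos_of_nonneg_of_nonpos hprod_nonneg hsum.le).trans zero_le_one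

namespace ProbabilityTheory

variable {Ω ι : Type*} [MeasurableSpace Ω] {μ : Measure Ω} {A : ι → Set Ω}

theorem iIndepSet.measureReal_biUnion (hA : ∀ i, MeasurableSet (A i)) (h : iIndepSet A μ)
    (s : Finset ι) : μ.real (⋃ i ∈ s, A i) = 1 - ∏ i ∈ s, (1 - μ.real (A i)) := by
  have := h.isProbabilityMeasure
  have hcompl : μ.real (⋂ i ∈ s, (A i)ᶜ) = ∏ i ∈ s, (1 - μ.real (A i)) := by
    rw [measureReal_def, ((iIndepSet_iff_iIndep A μ).1 h).meas_biInter
      fun i _ => (MeasurableSpace.measurableSet_generateFrom (mem_singleton _)).compl,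
      ENNReal.toReal_prod]
    exact Finset.prod_congr rfl fun i _ => by
      rw [← measureReal_def, probReal_compl_eq_one_sub (hA i)]
  rw [← hcompl, ← compl_iUnion₂,
    probReal_compl_eq_one_sub (s.measurableSet_biUnion fun i _ => hA i), sub_sub_cancel]

theorem iIndepSet.sum_measureReal_le_mul_measureReal_biUnion (hA : ∀ i, MeasurableSet (A i))
    (h : iIndepSet A μ) (s : Finset ι) :
    ∑ i ∈ s, μ.real (A i) ≤ (1 + ∑ i ∈ s, μ.real (A i)) * μ.real (⋃ i ∈ s, A i) := by
  have := h.isProbabilityMeasure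
  have hprod := prod_one_sub_mul_one_add_sum_le_one s (p := fun i => μ.real (A i))
    fun i _ => measureReal_le_one
  rw [h.measureReal_biUnion hA s]
  linarith

theorem iIndepSet.tsum_measureReal_le_mul_measureReal_iUnion (hA : ∀ i, MeasurableSet (A i))
    (h : iIndepSet A μ) :
    ∑' i, μ.real (A i) ≤ (1 + ∑' i, μ.real (A i)) * μ.real (⋃ i, A i) := by
  have := h.isProbabilityMeasure
  by_cases hsum : Summable fun i => μ.real (A i)
  · refine hsum.tsum_le_of_sum_le fun s => ?_
    calc ∑ i ∈ s, μ.real (A i) ≤ (1 + ∑ i ∈ s, μ.real (A i)) * μ.real (⋃ i ∈ s, A i) :=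
          h.sum_measureReal_le_mul_measureReal_biUnion hA s
      _ ≤ (1 + ∑' i, μ.real (A i)) * μ.real (⋃ i, A i) :=
          mul_le_mul (add_le_add_right (hsum.sum_le_tsum s fun i _ => measureReal_nonneg) 1)
            (measureReal_mono (iUnion₂_subset_iUnion _ _)) measureReal_nonneg
            (add_nonneg zero_le_one (tsum_nonneg fun i => measureReal_nonneg))
  · rw [tsum_eq_zero_of_not_summable hsum]
    positivity

end ProbabilityTheory

/-- For i.i.d. nonnegative random variables `Xₙ` with mean at most `C`, setting
`a_j := P[X₀ ≥ j]` and `b_k := P[sup_{n≥0}(Xₙ - n) ≥ k]`, one has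
`(1/(1+C)) ∑_{j≥k} a_j ≤ b_k ≤ ∑_{j≥k} a_j` for every `k ≥ 1`. -/
theorem tail_bounds_for_sup {Ω : Type*} [MeasurableSpace Ω]
    (μ : Measure Ω) [IsProbabilityMeasure μ] (X : ℕ → Ω → ℝ)
    (hmeas : ∀ n, Measurable (X n))
    (hindep : iIndepFun X μ)
    (hident : ∀ n, μ.map (X n) = μ.map (X 0))
    (hpos : ∀ n ω, 0 ≤ X n ω)
    (hint : Integrable (X 0) μ)
    (C : ℝ) (hC : ∫ ω, X 0 ω ∂μ ≤ C) :
    ∀ k : ℕ, 1 ≤ k →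
      (1 / (1 + C)) * (∑' j : ℕ, (μ {ω | ((k + j : ℕ) : ℝ) ≤ X 0 ω}).toReal)
          ≤ (μ {ω | (k : ℝ) ≤ ⨆ n : ℕ, (X n ω - n)}).toReal ∧
      (μ {ω | (k : ℝ) ≤ ⨆ n : ℕ, (X n ω - n)}).toReal
          ≤ ∑' j : ℕ, (μ {ω | ((k + j : ℕ) : ℝ) ≤ X 0 ω}).toReal := by
  intro k hk
  have hident' (n : ℕ) : IdentDistrib (X n) (X 0) μ μ :=
    ⟨(hmeas n).aemeasurable, (hmeas 0).aemeasurable, hident n⟩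
  set A : ℕ → Set Ω := fun n => {ω | (k : ℝ) + n ≤ X n ω}
  have hAmeas (n : ℕ) : MeasurableSet (A n) := measurableSet_le measurable_const (hmeas n)
  have hAμ (n : ℕ) : μ (A n) = μ {ω | (k : ℝ) + n ≤ X 0 ω} :=
    (hident' n).measure_mem_eq measurableSet_Ici
  have hAind : iIndepSet A μ := (iIndepSet_iff_meas_biInter hAmeas).2 fun s =>
    hindep.meas_biInter fun n _ => ⟨Ici _, measurableSet_Ici, rfl⟩
  have hS : ∑' n, μ (A n) ≤ ENNReal.ofReal C := by
    simpa only [hAμ] using (tsum_measure_natCast_add_le_le_ofReal_integral hint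
      (ae_of_all _ (hpos 0)) hk).trans (ENNReal.ofReal_le_ofReal hC)
  have hC0 : 0 ≤ C := (integral_nonneg (hpos 0)).trans hC
  have hSC : ∑' n, μ.real (A n) ≤ C := by
    simp only [measureReal_def]
    rw [← ENNReal.tsum_toReal_eq fun n => measure_ne_top μ _]
    exact ENNReal.toReal_le_of_le_ofReal hC0 hS
  simp only [Nat.cast_add, ← hAμ, ← measureReal_def,
    measure_le_iSup_sub_natCast_eq_measure_iUnion hident' hint (Nat.cast_pos.2 hk)]
  refine ⟨?_, measureReal_iUnion_le_tsum (ne_top_of_le_ne_top ENNReal.ofReal_ne_top hS)⟩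
  calc 1 / (1 + C) * ∑' n, μ.real (A n) ≤ 1 / (1 + C) * ((1 + C) * μ.real (⋃ n, A n)) := by
        gcongr
        exact (hAind.tsum_measureReal_le_mul_measureReal_iUnion hAmeas).trans (by gcongr)
    _ = μ.real (⋃ n, A n) := by
        rw [← mul_assoc, one_div_mul_cancel (by positivity), one_mul]
end

section
/- Let T be a measure-preserving automorphism of a probability space and let a, b : Ω → ℝ be measurable with log|a| integrable, ∫ log|a| dμ < 0, and log⁺|b| integrable. Then for μ-a.e. ω, the series X(ω) = ∑_{n=0}^∞ a(T⁻¹ω)a(T⁻²ω)···a(T⁻ⁿω) b(T⁻ⁿ⁻¹ω) converges absolutely. -/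
/-!
Write `log |a| = c + g` with `c = (∫ log |a|) / 2 < 0`, so that `∫ g < 0`. The set of points at
which the Birkhoff sums of `g` along `S = T⁻¹` are bounded above is `S`-invariant, hence null or
conull by ergodicity; were it null, the maximal ergodic lemma would give `∫ g ≥ 0`. So a.e.
`|a (S ω) ⋯ a (Sⁿ ω)| ≤ C e^{cn}`. On the other hand `log⁺ |b| (Sⁿ ω) ≤ -cn/2` for large `n`
by Borel–Cantelli, because `∑ₙ μ (log⁺ |b| > εn) < ∞` for every `ε > 0` when `log⁺ |b|` is
integrable. Hence the `n`-th term is eventually at most `C e^{cn/2}`.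
-/

open MeasureTheory Filter Set Function

section

variable {Ω : Type*} {S : Ω → Ω} {g : Ω → ℝ}

theorem partialSups_birkhoffSum_nonneg (N : ℕ) (ω : Ω) :
    0 ≤ partialSups (birkhoffSum S g) N ω := by
  simpa using le_partialSups_of_le (birkhoffSum S g) (Nat.zero_le N) ω

theorem partialSups_birkhoffSum_le_max (N : ℕ) (ω : Ω) :
    partialSups (birkhoffSum S g) N ω ≤ max 0 (g ω + partialSups (birkhoffSum S g) N (S ω)) := by
  rw [Pi.partialSups_apply]
  refine partialSups_le _ _ _ fun n hn => ?_
  cases n with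
  | zero => simp
  | succ n =>
    rw [birkhoffSum_succ']
    exact le_max_of_le_right <| (add_le_add_iff_left _).2 <|
      le_partialSups_of_le (birkhoffSum S g) (by omega : n ≤ N) (S ω)

theorem bddAbove_range_birkhoffSum_apply_iff (ω : Ω) :
    BddAbove (range fun n => birkhoffSum S g n (S ω)) ↔
      BddAbove (range fun n => birkhoffSum S g n ω) := by
  simp only [bddAbove_def, forall_mem_range]
  refine ⟨fun ⟨C, hC⟩ => ⟨max 0 (g ω + C), fun n => ?_⟩,
    fun ⟨C, hC⟩ => ⟨C - g ω, fun n => ?_⟩⟩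
  · cases n with
    | zero => simp
    | succ n => exact le_max_of_le_right (by rw [birkhoffSum_succ']; linarith [hC n])
  · linarith [hC (n + 1), birkhoffSum_succ' S g n ω]

theorem abs_prod_mul_le_exp_birkhoffSum (S : Ω → Ω) (a b : Ω → ℝ) (n : ℕ) (ω : Ω) :
    |(∏ i ∈ Finset.range n, a (S^[i + 1] ω)) * b (S^[n + 1] ω)| ≤
      Real.exp (birkhoffSum S (fun x => Real.log |a x|) n (S ω)) *
        Real.exp (max (Real.log |b (S^[n] (S ω))|) 0) := by
  simp only [abs_mul, Finset.abs_prod, birkhoffSum, Real.exp_sum, ← iterate_succ_apply]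
  gcongr with i
  · exact Real.le_exp_log _
  · exact (Real.le_exp_log _).trans (Real.exp_le_exp.2 (le_max_left _ _))

variable [MeasurableSpace Ω] {μ : Measure Ω}

theorem Ergodic.of_leftInverse {T : Ω → Ω} (hT : Ergodic T μ) (hS : Measurable S)
    (hST : LeftInverse S T) : Ergodic S μ where
  toMeasurePreserving := ⟨hS, calc
    μ.map S = (μ.map T).map S := by rw [hT.map_eq]
    _ = μ := by rw [Measure.map_map hS hT.measurable, hST.comp_eq_id, Measure.map_id]⟩
  aeconst_set s hs hSs := hT.aeconst_set hs <| by
    conv_lhs => rw [← hSs, ← preimage_comp, hST.comp_eq_id, preimage_id]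

theorem Measurable.birkhoffSum (hS : Measurable S) (hg : Measurable g) (n : ℕ) :
    Measurable (birkhoffSum S g n) :=
  Finset.measurable_sum _ fun i _ => hg.comp (hS.iterate i)

namespace MeasureTheory.MeasurePreserving

theorem integrable_birkhoffSum (hS : MeasurePreserving S μ μ) (hg : Integrable g μ) (n : ℕ) :
    Integrable (birkhoffSum S g n) μ :=
  integrable_finsetSum _ fun i _ => ((hS.iterate i).integrable_comp hg.aestronglyMeasurable).2 hg

theorem integrable_partialSups_birkhoffSum (hS : MeasurePreserving S μ μ)
    (hg : Integrable g μ) (N : ℕ) : Integrable (partialSups (birkhoffSum S g) N) μ := by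
  induction N with
  | zero => simp
  | succ N ih => simpa using ih.sup (hS.integrable_birkhoffSum hg (N + 1))

theorem setIntegral_partialSups_birkhoffSum_pos_nonneg (hS : MeasurePreserving S μ μ)
    (hg : Integrable g μ) (N : ℕ) :
    0 ≤ ∫ ω in {ω | 0 < partialSups (birkhoffSum S g) N ω}, g ω ∂μ := by
  set M := partialSups (birkhoffSum S g) N
  have hM : Integrable M μ := hS.integrable_partialSups_birkhoffSum hg N
  have hMS : Integrable (fun ω => M (S ω)) μ := (hS.integrable_comp hM.aestronglyMeasurable).2 hM
  have hA : NullMeasurableSet {ω | 0 < M ω} μ :=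
    nullMeasurableSet_lt aemeasurable_const hM.aemeasurable
  have hpointwise (ω : Ω) : M ω - M (S ω) ≤ {ω | 0 < M ω}.indicator g ω := by
    have hmax := partialSups_birkhoffSum_le_max (S := S) (g := g) N ω
    have hMS_nonneg := partialSups_birkhoffSum_nonneg (S := S) (g := g) N (S ω)
    by_cases hω : 0 < M ω
    · rw [indicator_of_mem (show ω ∈ {ω | 0 < M ω} from hω)]
      linarith [(le_max_iff.1 hmax).resolve_left hω.not_ge]
    · rw [indicator_of_notMem (show ω ∉ {ω | 0 < M ω} from hω)]
      linarith [not_lt.1 hω]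
  have hinvariant : ∫ ω, M (S ω) ∂μ = ∫ ω, M ω ∂μ := by
    rw [← integral_map hS.aemeasurable (by rw [hS.map_eq]; exact hM.aestronglyMeasurable),
      hS.map_eq]
  calc 0 = ∫ ω, M ω - M (S ω) ∂μ := by rw [integral_sub hM hMS, hinvariant, sub_self]
    _ ≤ ∫ ω, {ω | 0 < M ω}.indicator g ω ∂μ :=
        integral_mono (hM.sub hMS) (hg.indicator₀ hA) hpointwise
    _ = ∫ ω in {ω | 0 < M ω}, g ω ∂μ := integral_indicator₀ hA

theorem setIntegral_exists_birkhoffSum_pos_nonneg (hS : MeasurePreserving S μ μ)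
    (hg : Integrable g μ) : 0 ≤ ∫ ω in {ω | ∃ n, 0 < birkhoffSum S g n ω}, g ω ∂μ := by
  have hunion : {ω | ∃ n, 0 < birkhoffSum S g n ω} =
      ⋃ N, {ω | 0 < partialSups (birkhoffSum S g) N ω} := by
    ext ω
    simp only [mem_ofPred_eq, mem_iUnion, Pi.partialSups_apply]
    refine ⟨fun ⟨n, hn⟩ => ⟨n, hn.trans_le (le_partialSups (birkhoffSum S g · ω) n)⟩,
      fun ⟨N, hN⟩ => ?_⟩
    by_contra! hle
    exact hN.not_ge (partialSups_le _ N 0 fun n _ => hle n)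
  have hmono : Monotone fun N => {ω | 0 < partialSups (birkhoffSum S g) N ω} :=
    fun M N hMN ω hω => hω.trans_le (partialSups_monotone (birkhoffSum S g) hMN ω)
  rw [hunion]
  exact ge_of_tendsto' (tendsto_setIntegral_of_monotone₀ (fun N => nullMeasurableSet_lt
      aemeasurable_const (hS.integrable_partialSups_birkhoffSum hg N).aemeasurable)
      hmono hg.integrableOn)
    (hS.setIntegral_partialSups_birkhoffSum_pos_nonneg hg)

theorem ae_eventually_le_mul [IsProbabilityMeasure μ] (hS : MeasurePreserving S μ μ)
    {h : Ω → ℝ} (hh : Integrable h μ) (hh0 : 0 ≤ h) {ε : ℝ} (hε : 0 < ε) :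
    ∀ᵐ ω ∂μ, ∀ᶠ n : ℕ in atTop, h (S^[n] ω) ≤ ε * n := by
  -- `tsum_prob_mem_Ioi_lt_top` is stated for the measure `ℙ` of a `MeasureSpace`.
  let _ : MeasureSpace Ω := ⟨μ⟩
  have hsum := ProbabilityTheory.tsum_prob_mem_Ioi_lt_top (hh.div_const ε)
    (fun ω => div_nonneg (hh0 ω) hε.le)
  have hpre (n : ℕ) : μ (S^[n] ⁻¹' {ω | h ω / ε ∈ Ioi (n : ℝ)}) = μ {ω | h ω / ε ∈ Ioi (n : ℝ)} :=
    (hS.iterate n).measure_preimage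
      (nullMeasurableSet_lt aemeasurable_const (hh.div_const ε).aemeasurable)
  filter_upwards [ae_eventually_notMem (s := fun n => S^[n] ⁻¹' {ω | h ω / ε ∈ Ioi (n : ℝ)})
    (by simp_rw [hpre]; exact hsum.ne)] with ω hω
  filter_upwards [hω] with n hn
  simp only [mem_preimage, mem_ofPred_eq, mem_Ioi, not_lt] at hn
  rwa [div_le_iff₀ hε, mul_comm] at hn

end MeasureTheory.MeasurePreserving

theorem Ergodic.ae_bddAbove_birkhoffSum (hS : Ergodic S μ) (hgm : Measurable g)
    (hg : Integrable g μ) (hneg : ∫ ω, g ω ∂μ < 0) :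
    ∀ᵐ ω ∂μ, BddAbove (range fun n => birkhoffSum S g n ω) := by
  set B := {ω | BddAbove (range fun n => birkhoffSum S g n ω)}
  have hB : MeasurableSet B := measurableSet_bddAbove_range (hS.measurable.birkhoffSum hgm)
  have hSB : S ⁻¹' B = B := ext bddAbove_range_birkhoffSum_apply_iff
  refine (hS.measure_self_or_compl_eq_zero hB hSB).elim (fun hB0 => absurd ?_ hneg.not_ge)
    mem_ae_iff.2
  have hpos : ∀ᵐ ω ∂μ, ω ∈ {ω | ∃ n, 0 < birkhoffSum S g n ω} :=
    ae_iff.2 <| measure_mono_null (fun ω hω => show ω ∈ B from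
      ⟨0, forall_mem_range.2 fun n => not_lt.1 fun hn => hω ⟨n, hn⟩⟩) hB0
  simpa [Measure.restrict_eq_self_of_ae_mem hpos] using
    hS.toMeasurePreserving.setIntegral_exists_birkhoffSum_pos_nonneg hg

end

theorem series_converges_ae_general {Ω : Type*} [MeasurableSpace Ω]
    (μ : Measure Ω) [IsProbabilityMeasure μ] (T S : Ω → Ω)
    (hErg : Ergodic T μ)
    (hSmeas : Measurable S)
    (hST : Function.LeftInverse S T)
    (a b : Ω → ℝ) (hma : Measurable a)
    (hla : Integrable (fun ω => Real.log |a ω|) μ)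
    (hneg : ∫ ω, Real.log |a ω| ∂μ < 0)
    (hlb : Integrable (fun ω => max (Real.log |b ω|) 0) μ) :
    ∀ᵐ ω ∂μ, Summable
      (fun n : ℕ => |(∏ i ∈ Finset.range n, a (S^[i + 1] ω)) * b (S^[n + 1] ω)|) := by
  have hS : Ergodic S μ := hErg.of_leftInverse hSmeas hST
  set c := (∫ ω, Real.log |a ω| ∂μ) / 2 with hc
  have hmean : ∫ ω, Real.log |a ω| - c ∂μ < 0 := by
    rw [integral_sub hla (integrable_const c), integral_const, probReal_univ, one_smul]
    linarith
  have hbdd := hS.ae_bddAbove_birkhoffSum (by fun_prop) (hla.sub (integrable_const c)) hmean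
  have hgrowth := hS.ae_eventually_le_mul hlb (fun ω => le_max_right _ _)
    (show 0 < -c / 2 by linarith)
  filter_upwards [hS.quasiMeasurePreserving.ae (hbdd.and hgrowth)] with ω ⟨⟨C, hC⟩, hgrow⟩
  refine Summable.of_norm_bounded_eventually ((summable_geometric_of_lt_one (Real.exp_nonneg _)
    (Real.exp_lt_one_iff.2 (show c / 2 < 0 by linarith))).mul_left (Real.exp C)) ?_
  rw [Nat.cofinite_eq_atTop]
  filter_upwards [hgrow] with n hn
  have hsum : birkhoffSum S (fun x => Real.log |a x|) n (S ω) ≤ C + c * n := by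
    have := mem_upperBounds.1 hC _ (mem_range_self n)
    rw [birkhoffSum_sub, birkhoffSum_of_comp_eq (rfl : (fun _ => c) ∘ S = _)] at this
    simp only [Pi.smul_apply, nsmul_eq_mul] at this
    linarith
  calc ‖|(∏ i ∈ Finset.range n, a (S^[i + 1] ω)) * b (S^[n + 1] ω)|‖
      ≤ Real.exp (C + c * n) * Real.exp (-c / 2 * n) := by
        rw [Real.norm_eq_abs, abs_abs]
        refine (abs_prod_mul_le_exp_birkhoffSum S a b n ω).trans ?_
        gcongr
    _ = Real.exp C * Real.exp (c / 2) ^ n := by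
        rw [← Real.exp_nat_mul, ← Real.exp_add, ← Real.exp_add]
        ring_nf

/-- Let `T` be an ergodic measure-preserving automorphism (with inverse `S`) of a
probability space and `a, b` measurable functions with `log |a|` integrable of
negative mean and `log⁺ |b|` integrable. Then for a.e. `ω` the series
`∑ₙ a(T⁻¹ω)⋯a(T⁻ⁿω) b(T⁻ⁿ⁻¹ω)` converges absolutely. -/
theorem series_converges_ae {Ω : Type*} [MeasurableSpace Ω]
    (μ : Measure Ω) [IsProbabilityMeasure μ] (T S : Ω → Ω)
    (hT : MeasurePreserving T μ μ) (hErg : Ergodic T μ)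
    (hSmeas : Measurable S)
    (hST : Function.LeftInverse S T) (hTS : Function.RightInverse S T)
    (a b : Ω → ℝ) (hma : Measurable a) (hmb : Measurable b)
    (ha0 : ∀ ω, a ω ≠ 0)
    (hla : Integrable (fun ω => Real.log |a ω|) μ)
    (hneg : ∫ ω, Real.log |a ω| ∂μ < 0)
    (hlb : Integrable (fun ω => max (Real.log |b ω|) 0) μ) :
    ∀ᵐ ω ∂μ, Summable
      (fun n : ℕ => |(∏ i ∈ Finset.range n, a (S^[i + 1] ω)) * b (S^[n + 1] ω)|) :=
  series_converges_ae_general μ T S hErg hSmeas hST a b hma hla hneg hlb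
end

section
/- The function X satisfying the cocycle relation: with notation as above, X(Tω) = a(ω)X(ω) + b(ω) for μ-a.e. ω, where X(ω) = ∑_{n=0}^∞ a(T⁻¹ω)···a(T⁻ⁿω) b(T⁻ⁿ⁻¹ω). -/
/-!
Because `S ∘ T = id`, the series at `T ω` is `b ω` followed by `a ω` times the series at `ω`, so
the relation holds wherever the series at `ω` converges, and the set of such `ω` is mapped into
itself by `T`. Choose `∫ log |a| < c < 0`. Garsia's maximal inequality, applied to `log |a|`
along `S`, gives a set of positive measure on which `∑_{i<n} log |a (S^{i+1} ω)| ≤ n c` for all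
`n`, and Borel–Cantelli gives `log⁺ |b (Sⁿ ω)| = o(n)` almost surely; there the terms decay
geometrically. Ergodicity of `T` spreads convergence to almost every `ω`.
-/

open MeasureTheory Filter Set Topology

section BirkhoffMax

variable {α : Type*}

/-- `birkhoffMax f g n x = max 0 (max_{k ≤ n} birkhoffSum f g k x)`. -/
noncomputable def birkhoffMax (f : α → α) (g : α → ℝ) : ℕ → α → ℝ
  | 0 => 0
  | n + 1 => fun x => max 0 (g x + birkhoffMax f g n (f x))

variable {f : α → α} {g : α → ℝ}

lemma birkhoffMax_succ (n : ℕ) (x : α) :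
    birkhoffMax f g (n + 1) x = max 0 (g x + birkhoffMax f g n (f x)) := rfl

lemma birkhoffMax_nonneg (n : ℕ) (x : α) : 0 ≤ birkhoffMax f g n x := by
  cases n with
  | zero => rfl
  | succ n => exact le_max_left _ _

lemma birkhoffMax_le_succ (n : ℕ) (x : α) : birkhoffMax f g n x ≤ birkhoffMax f g (n + 1) x := by
  induction n generalizing x with
  | zero => exact birkhoffMax_nonneg 1 x
  | succ n ih => exact max_le_max le_rfl (add_le_add le_rfl (ih (f x)))

lemma birkhoffSum_le_birkhoffMax (n : ℕ) (x : α) : birkhoffSum f g n x ≤ birkhoffMax f g n x := by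
  induction n generalizing x with
  | zero => exact le_rfl
  | succ n ih =>
    rw [birkhoffSum_succ', birkhoffMax_succ]
    exact le_max_of_le_right (add_le_add le_rfl (ih (f x)))

variable [MeasurableSpace α] {μ : Measure α}

lemma measurable_birkhoffMax (hf : Measurable f) (hg : Measurable g) (n : ℕ) :
    Measurable (birkhoffMax f g n) := by
  induction n with
  | zero => exact measurable_const
  | succ n ih => exact measurable_const.max (hg.add (ih.comp hf))

lemma integrable_birkhoffMax (hf : MeasurePreserving f μ μ) (hg : Integrable g μ) (n : ℕ) :
    Integrable (birkhoffMax f g n) μ := by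
  induction n with
  | zero => exact integrable_zero _ _ _
  | succ n ih => exact (integrable_zero _ _ _).sup (hg.add (hf.integrable_comp_of_integrable ih))

/-- Garsia's maximal inequality. -/
theorem setIntegral_birkhoffMax_pos_nonneg (hf : MeasurePreserving f μ μ) (hg : Measurable g)
    (hgi : Integrable g μ) (n : ℕ) :
    0 ≤ ∫ x in {x | 0 < birkhoffMax f g (n + 1) x}, g x ∂μ := by
  set E := {x | 0 < birkhoffMax f g (n + 1) x}
  have hE : MeasurableSet E :=
    measurableSet_lt measurable_const (measurable_birkhoffMax hf.measurable hg _)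
  have hM := integrable_birkhoffMax hf hgi
  have hMf : Integrable (fun x => birkhoffMax f g n (f x)) μ :=
    hf.integrable_comp_of_integrable (hM n)
  -- On `E` the maximum is attained by a genuine partial sum, off `E` it vanishes.
  have hpt : ∀ x, birkhoffMax f g (n + 1) x - birkhoffMax f g n (f x) ≤ E.indicator g x := by
    intro x
    by_cases hx : x ∈ E
    · have hpos : 0 < g x + birkhoffMax f g n (f x) := (lt_max_iff.1 hx).resolve_left (lt_irrefl 0)
      rw [indicator_of_mem hx, birkhoffMax_succ, max_eq_right hpos.le]
      linarith
    · have h0 : birkhoffMax f g (n + 1) x = 0 := le_antisymm (not_lt.1 hx) (birkhoffMax_nonneg _ _)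
      rw [indicator_of_notMem hx, h0]
      linarith [birkhoffMax_nonneg (f := f) (g := g) n (f x)]
  have hcomp : ∫ x, birkhoffMax f g n (f x) ∂μ = ∫ x, birkhoffMax f g n x ∂μ := by
    rw [← integral_map hf.measurable.aemeasurable
      (measurable_birkhoffMax hf.measurable hg n).aestronglyMeasurable, hf.map_eq]
  calc (0 : ℝ) ≤ ∫ x, birkhoffMax f g (n + 1) x ∂μ - ∫ x, birkhoffMax f g n x ∂μ :=
        sub_nonneg.2 (integral_mono (hM n) (hM (n + 1)) (birkhoffMax_le_succ n))
    _ = ∫ x, (birkhoffMax f g (n + 1) x - birkhoffMax f g n (f x)) ∂μ := by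
        rw [integral_sub (hM _) hMf, hcomp]
    _ ≤ ∫ x, E.indicator g x ∂μ := integral_mono ((hM _).sub hMf) (hgi.indicator hE) hpt
    _ = ∫ x in E, g x ∂μ := integral_indicator hE

theorem integral_nonneg_of_ae_exists_birkhoffSum_pos (hf : MeasurePreserving f μ μ)
    (hg : Measurable g) (hgi : Integrable g μ) (h : ∀ᵐ x ∂μ, ∃ n, 0 < birkhoffSum f g n x) :
    0 ≤ ∫ x, g x ∂μ := by
  set E : ℕ → Set α := fun n => {x | 0 < birkhoffMax f g (n + 1) x}
  have hE : ∀ n, MeasurableSet (E n) := fun n =>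
    measurableSet_lt measurable_const (measurable_birkhoffMax hf.measurable hg _)
  have hmono : Monotone E := monotone_nat_of_le_succ fun n x hx =>
    hx.trans_le (birkhoffMax_le_succ (n + 1) x)
  have hunion : (⋃ n, E n) =ᵐ[μ] (univ : Set α) := by
    refine ae_eq_univ.2 (measure_eq_zero_iff_ae_notMem.2 ?_)
    filter_upwards [h] with x ⟨n, hn⟩ hx
    have hpos := hn.trans_le (birkhoffSum_le_birkhoffMax n x)
    cases n with
    | zero => exact hpos.false
    | succ n => exact hx (mem_iUnion.2 ⟨n, hpos⟩)
  have hlim := tendsto_setIntegral_of_monotone hE hmono hgi.integrableOn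
  rw [setIntegral_congr_set hunion, setIntegral_univ] at hlim
  exact ge_of_tendsto' hlim fun n => setIntegral_birkhoffMax_pos_nonneg hf hg hgi n

theorem measure_forall_birkhoffSum_le_pos [IsProbabilityMeasure μ] (hf : MeasurePreserving f μ μ)
    (hg : Measurable g) (hgi : Integrable g μ) {c : ℝ} (hc : ∫ x, g x ∂μ < c) :
    0 < μ {x | ∀ n : ℕ, birkhoffSum f g n x ≤ n * c} := by
  refine pos_iff_ne_zero.2 fun h0 => hc.not_ge ?_
  have hsub := integral_nonneg_of_ae_exists_birkhoffSum_pos (g := fun x => g x - c) hf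
    (hg.sub_const c) (hgi.sub (integrable_const c)) ?_
  · rw [integral_sub hgi (integrable_const c)] at hsub
    simpa using hsub
  · filter_upwards [measure_eq_zero_iff_ae_notMem.1 h0] with x hx
    obtain ⟨n, hn⟩ := not_forall.1 hx
    refine ⟨n, ?_⟩
    simp only [birkhoffSum, Finset.sum_sub_distrib, Finset.sum_const, Finset.card_range,
      nsmul_eq_mul] at hn ⊢
    linarith [not_le.1 hn]

end BirkhoffMax

section MeasurePreserving

variable {Ω : Type*} [MeasurableSpace Ω] {μ : Measure Ω}

lemma MeasureTheory.MeasurePreserving.of_leftInverse {β : Type*} [MeasurableSpace β]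
    {ν : Measure β} {T : Ω → β} {S : β → Ω} (hT : MeasurePreserving T μ ν) (hS : Measurable S)
    (h : Function.LeftInverse S T) : MeasurePreserving S ν μ :=
  ⟨hS, by rw [← hT.map_eq, Measure.map_map hS hT.measurable, h.comp_eq_id, Measure.map_id]⟩

lemma Ergodic.ae_mem_of_subset_preimage [IsFiniteMeasure μ] {T : Ω → Ω} (hT : Ergodic T μ)
    {s : Set Ω} (hs : MeasurableSet s) (hsT : s ⊆ T ⁻¹' s) (hμs : μ s ≠ 0) : ∀ᵐ x ∂μ, x ∈ s := by
  rcases hT.ae_empty_or_univ_of_ae_le_preimage hs.nullMeasurableSet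
    (Eventually.of_forall hsT) with h | h
  · exact absurd (by rw [measure_congr h, measure_empty]) hμs
  · exact ae_eq_univ.1 h

lemma measurableSet_setOf_summable {f : ℕ → Ω → ℝ} (hf : ∀ n, Measurable (f n)) :
    MeasurableSet {x | Summable fun n => f n x} := by
  have : {x | Summable fun n => f n x} =
      {x | ∃ c, Tendsto (fun n => ∑ i ∈ Finset.range n, |f i x|) atTop (𝓝 c)} := by
    ext x
    exact summable_abs_iff.symm.trans
      (exists_congr fun c => hasSum_iff_tendsto_nat_of_nonneg (fun i => abs_nonneg _) c)
  rw [this]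
  exact measurableSet_exists_tendsto fun n =>
    (Finset.measurable_sum _ fun i _ => (hf i).abs)

lemma MeasureTheory.MeasurePreserving.ae_eventually_comp_iterate_le [IsProbabilityMeasure μ]
    {R : Ω → Ω} (hR : MeasurePreserving R μ μ) {f : Ω → ℝ} (hf : Integrable f μ) {ε : ℝ}
    (hε : 0 < ε) : ∀ᵐ x ∂μ, ∀ᶠ n : ℕ in atTop, f (R^[n] x) ≤ ε * n := by
  set F : Ω → ℝ := fun x => |f x| / ε
  have hFi : Integrable F μ := hf.abs.div_const ε
  have hsum : ∑' n : ℕ, μ {x | F x ∈ Ioi (n : ℝ)} ≠ ⊤ := by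
    let _ : MeasureSpace Ω := ⟨μ⟩
    exact (ProbabilityTheory.tsum_prob_mem_Ioi_lt_top hFi fun x => by positivity).ne
  have hpre : ∀ n : ℕ, μ (R^[n] ⁻¹' {x | F x ∈ Ioi (n : ℝ)}) = μ {x | F x ∈ Ioi (n : ℝ)} :=
    fun n => (hR.iterate n).measure_preimage
      (hFi.aemeasurable.nullMeasurable measurableSet_Ioi)
  filter_upwards [ae_eventually_notMem ((tsum_congr hpre).trans_ne hsum)] with x hx
  filter_upwards [hx] with n hn
  have : |f (R^[n] x)| / ε ≤ n := not_lt.1 hn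
  rw [div_le_iff₀ hε] at this
  linarith [le_abs_self (f (R^[n] x))]

end MeasurePreserving

section CocycleTerm

variable {Ω : Type*} {S T : Ω → Ω} {a b : Ω → ℝ}

def cocycleTerm (S : Ω → Ω) (a b : Ω → ℝ) (n : ℕ) (ω : Ω) : ℝ :=
  (∏ i ∈ Finset.range n, a (S^[i + 1] ω)) * b (S^[n + 1] ω)

lemma cocycleTerm_zero_apply (hST : Function.LeftInverse S T) (ω : Ω) :
    cocycleTerm S a b 0 (T ω) = b ω := by
  simp [cocycleTerm, hST ω]

lemma cocycleTerm_succ_apply (hST : Function.LeftInverse S T) (n : ℕ) (ω : Ω) :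
    cocycleTerm S a b (n + 1) (T ω) = a ω * cocycleTerm S a b n ω := by
  simp only [cocycleTerm, Function.iterate_succ_apply, hST ω, Finset.prod_range_succ',
    Function.iterate_zero_apply]
  ring

lemma summable_cocycleTerm_apply (hST : Function.LeftInverse S T) {ω : Ω}
    (h : Summable fun n => cocycleTerm S a b n ω) :
    Summable fun n => cocycleTerm S a b n (T ω) := by
  refine (summable_nat_add_iff 1).1 ?_
  simpa only [cocycleTerm_succ_apply hST] using h.mul_left (a ω)

lemma tsum_cocycleTerm_apply (hST : Function.LeftInverse S T) {ω : Ω}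
    (h : Summable fun n => cocycleTerm S a b n ω) :
    ∑' n, cocycleTerm S a b n (T ω) = a ω * ∑' n, cocycleTerm S a b n ω + b ω := by
  rw [(summable_cocycleTerm_apply hST h).tsum_eq_zero_add, cocycleTerm_zero_apply hST]
  simp only [cocycleTerm_succ_apply hST, tsum_mul_left]
  ring

lemma measurable_cocycleTerm [MeasurableSpace Ω] (hS : Measurable S) (ha : Measurable a)
    (hb : Measurable b) (n : ℕ) : Measurable (cocycleTerm S a b n) :=
  (Finset.measurable_prod _ fun i _ => ha.comp (hS.iterate (i + 1))).mul
    (hb.comp (hS.iterate (n + 1)))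

lemma abs_cocycleTerm_le (n : ℕ) (ω : Ω) :
    |cocycleTerm S a b n ω| ≤
      Real.exp (birkhoffSum S (fun x => Real.log |a x|) n (S ω) +
        max (Real.log |b (S^[n] (S ω))|) 0) := by
  rw [cocycleTerm, abs_mul, Finset.abs_prod, Real.exp_add, birkhoffSum, Real.exp_sum]
  gcongr with i
  · exact Real.le_exp_log _
  · exact (Real.le_exp_log _).trans (Real.exp_le_exp.2 (le_max_left _ _))

lemma summable_cocycleTerm_of_le {c : ℝ} (hc : c < 0) {ω : Ω}
    (ha : ∀ n : ℕ, birkhoffSum S (fun x => Real.log |a x|) n (S ω) ≤ n * c)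
    (hb : ∀ᶠ n : ℕ in atTop, max (Real.log |b (S^[n] (S ω))|) 0 ≤ -c / 2 * n) :
    Summable fun n => cocycleTerm S a b n ω := by
  refine Summable.of_norm_bounded_eventually
    (Real.summable_exp_nat_mul_iff.2 (by linarith : c / 2 < 0)) ?_
  rw [Nat.cofinite_eq_atTop]
  filter_upwards [hb] with n hn
  refine (abs_cocycleTerm_le n ω).trans (Real.exp_le_exp.2 ?_)
  linarith [ha n]

theorem ae_summable_cocycleTerm [MeasurableSpace Ω] {μ : Measure Ω} [IsProbabilityMeasure μ]
    (hT : Ergodic T μ) (hS : Measurable S) (hST : Function.LeftInverse S T)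
    (ha : Measurable a) (hb : Measurable b)
    (hla : Integrable (fun ω => Real.log |a ω|) μ) (hneg : ∫ ω, Real.log |a ω| ∂μ < 0)
    (hlb : Integrable (fun ω => max (Real.log |b ω|) 0) μ) :
    ∀ᵐ ω ∂μ, Summable fun n => cocycleTerm S a b n ω := by
  have hSμ : MeasurePreserving S μ μ := hT.toMeasurePreserving.of_leftInverse hS hST
  have hla_meas : Measurable fun ω => Real.log |a ω| := ha.abs.log
  obtain ⟨c, hac, hc⟩ := exists_between hneg
  set A := {x | ∀ n : ℕ, birkhoffSum S (fun x => Real.log |a x|) n x ≤ n * c}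
  have hA_meas : MeasurableSet A := by
    simp only [A, ofPred_forall]
    exact MeasurableSet.iInter fun n => measurableSet_le
      (Finset.measurable_sum _ fun i _ => hla_meas.comp (hS.iterate i)) measurable_const
  have hA : 0 < μ (S ⁻¹' A) := by
    rw [hSμ.measure_preimage hA_meas.nullMeasurableSet]
    exact measure_forall_birkhoffSum_le_pos hSμ hla_meas hla hac
  have hbS := hSμ.quasiMeasurePreserving.ae
    (hSμ.ae_eventually_comp_iterate_le hlb (ε := -c / 2) (by linarith))
  have hAG : S ⁻¹' A ≤ᵐ[μ] {ω | Summable fun n => cocycleTerm S a b n ω} := by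
    filter_upwards [hbS] with ω hbω hAω
    exact summable_cocycleTerm_of_le hc hAω hbω
  exact hT.ae_mem_of_subset_preimage
    (measurableSet_setOf_summable (measurable_cocycleTerm hS ha hb))
    (fun ω => summable_cocycleTerm_apply hST) (hA.trans_le (measure_mono_ae hAG)).ne'

end CocycleTerm

theorem series_cocycle_relation_general {Ω : Type*} [MeasurableSpace Ω]
    (μ : Measure Ω) [IsProbabilityMeasure μ] (T S : Ω → Ω)
    (hErg : Ergodic T μ)
    (hSmeas : Measurable S)
    (hST : Function.LeftInverse S T)
    (a b : Ω → ℝ) (hma : Measurable a) (hmb : Measurable b)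
    (hla : Integrable (fun ω => Real.log |a ω|) μ)
    (hneg : ∫ ω, Real.log |a ω| ∂μ < 0)
    (hlb : Integrable (fun ω => max (Real.log |b ω|) 0) μ)
    (X : Ω → ℝ)
    (hX : ∀ ω, X ω = ∑' n : ℕ, (∏ i ∈ Finset.range n, a (S^[i + 1] ω)) * b (S^[n + 1] ω)) :
    ∀ᵐ ω ∂μ, X (T ω) = a ω * X ω + b ω := by
  filter_upwards [ae_summable_cocycleTerm hErg hSmeas hST hma hmb hla hneg hlb] with ω hω
  rw [hX, hX]
  exact tsum_cocycleTerm_apply hST hω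

/-- With `X(ω) = ∑ₙ a(T⁻¹ω)⋯a(T⁻ⁿω) b(T⁻ⁿ⁻¹ω)`, one has the cocycle relation
`X(Tω) = a(ω) X(ω) + b(ω)` for a.e. `ω`. -/
theorem series_cocycle_relation {Ω : Type*} [MeasurableSpace Ω]
    (μ : Measure Ω) [IsProbabilityMeasure μ] (T S : Ω → Ω)
    (hT : MeasurePreserving T μ μ) (hErg : Ergodic T μ)
    (hSmeas : Measurable S)
    (hST : Function.LeftInverse S T) (hTS : Function.RightInverse S T)
    (a b : Ω → ℝ) (hma : Measurable a) (hmb : Measurable b)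
    (ha0 : ∀ ω, a ω ≠ 0)
    (hla : Integrable (fun ω => Real.log |a ω|) μ)
    (hneg : ∫ ω, Real.log |a ω| ∂μ < 0)
    (hlb : Integrable (fun ω => max (Real.log |b ω|) 0) μ)
    (X : Ω → ℝ)
    (hX : ∀ ω, X ω = ∑' n : ℕ, (∏ i ∈ Finset.range n, a (S^[i + 1] ω)) * b (S^[n + 1] ω)) :
    ∀ᵐ ω ∂μ, X (T ω) = a ω * X ω + b ω :=
  series_cocycle_relation_general μ T S hErg hSmeas hST a b hma hmb hla hneg hlb X hX
end

section
/- Let g ∈ GL_2(ℝ). For any two lines E₁ ≠ E₂ in ℝ², the angle θ' between gE₁ and gE₂ and the angle θ between E₁ and E₂ satisfy |log sin θ' − log sin θ| ≤ log‖g‖ + log‖g⁻¹‖. -/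
open InnerProductGeometry Real

variable {V : Type*} [NormedAddCommGroup V] [InnerProductSpace ℝ V]

local notation "⟪" x ", " y "⟫" => @inner ℝ _ _ x y

lemma gram_invariant (x y : V) (t : ℝ) :
    ⟪x, x⟫ * ⟪y - t • x, y - t • x⟫ - ⟪x, y - t • x⟫ * ⟪x, y - t • x⟫
      = ⟪x, x⟫ * ⟪y, y⟫ - ⟪x, y⟫ * ⟪x, y⟫ := by
  simp only [inner_sub_left, inner_sub_right, real_inner_smul_left, real_inner_smul_right,
    real_inner_comm x y]
  ring

lemma sin_angle_le (x y : V) (t : ℝ) :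
    Real.sin (angle x y) * (‖x‖ * ‖y‖) ≤ ‖x‖ * ‖y - t • x‖ := by
  rw [sin_angle_mul_norm_mul_norm, ← gram_invariant x y t,
    ← sin_angle_mul_norm_mul_norm]
  calc Real.sin (angle x (y - t • x)) * (‖x‖ * ‖y - t • x‖)
      ≤ 1 * (‖x‖ * ‖y - t • x‖) := by
        apply mul_le_mul_of_nonneg_right (Real.sin_le_one _)
        positivity
    _ = ‖x‖ * ‖y - t • x‖ := one_mul _

lemma sin_angle_eq (x y : V) (hx : x ≠ 0) :
    Real.sin (angle x y) * (‖x‖ * ‖y‖) = ‖x‖ * ‖y - (⟪x, y⟫ / ⟪x, x⟫) • x‖ := by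
  set t := ⟪x, y⟫ / ⟪x, x⟫ with ht
  have hxx : ⟪x, x⟫ ≠ 0 := inner_self_ne_zero.2 hx
  have horth : ⟪x, y - t • x⟫ = 0 := by
    rw [inner_sub_right, real_inner_smul_right, ht, div_mul_cancel₀ _ hxx, sub_self]
  have hang : angle x (y - t • x) = π / 2 := (inner_eq_zero_iff_angle_eq_pi_div_two _ _).1 horth
  rw [sin_angle_mul_norm_mul_norm, ← gram_invariant x y t, ← sin_angle_mul_norm_mul_norm,
    hang, Real.sin_pi_div_two, one_mul]

/-- Key inequality. -/
lemma key (g : V ≃L[ℝ] V) (u₁ u₂ : V) (h1 : u₁ ≠ 0) (h2 : u₂ ≠ 0) :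
    Real.sin (angle u₁ u₂) ≤ Real.sin (angle (g u₁) (g u₂)) *
      (‖(g : V →L[ℝ] V)‖ * ‖(g.symm : V →L[ℝ] V)‖) := by
  have hg1 : g u₁ ≠ 0 := by simpa using h1
  have hg2 : g u₂ ≠ 0 := by simpa using h2
  set t := ⟪g u₁, g u₂⟫ / ⟪g u₁, g u₁⟫ with ht
  have heq := sin_angle_eq (g u₁) (g u₂) hg1
  have hn1 : (0:ℝ) < ‖u₁‖ := norm_pos_iff.2 h1
  have hn2 : (0:ℝ) < ‖u₂‖ := norm_pos_iff.2 h2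
  have hng1 : (0:ℝ) < ‖g u₁‖ := norm_pos_iff.2 hg1
  have hng2 : (0:ℝ) < ‖g u₂‖ := norm_pos_iff.2 hg2
  -- ‖g u₂ - t • g u₁‖ = ‖g (u₂ - t • u₁)‖ ≥ ‖u₂ - t • u₁‖ / ‖g.symm‖
  have hgsub : g u₂ - t • g u₁ = g (u₂ - t • u₁) := by
    rw [map_sub, map_smul]
  have hsymm_pos : (0:ℝ) < ‖(g.symm : V →L[ℝ] V)‖ := by
    refine lt_of_lt_of_le (div_pos hn1 hng1) ?_
    rw [div_le_iff₀ hng1]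
    calc ‖u₁‖ = ‖g.symm (g u₁)‖ := by simp
      _ ≤ ‖(g.symm : V →L[ℝ] V)‖ * ‖g u₁‖ := (g.symm : V →L[ℝ] V).le_opNorm _
  have hg_pos : (0:ℝ) < ‖(g : V →L[ℝ] V)‖ := by
    refine lt_of_lt_of_le (div_pos hng1 hn1) ?_
    rw [div_le_iff₀ hn1]
    exact (g : V →L[ℝ] V).le_opNorm _
  have hlow : ‖u₂ - t • u₁‖ ≤ ‖(g.symm : V →L[ℝ] V)‖ * ‖g u₂ - t • g u₁‖ := by
    rw [hgsub]
    calc ‖u₂ - t • u₁‖ = ‖g.symm (g (u₂ - t • u₁))‖ := by simp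
      _ ≤ ‖(g.symm : V →L[ℝ] V)‖ * ‖g (u₂ - t • u₁)‖ := (g.symm : V →L[ℝ] V).le_opNorm _
  -- sin θ * ‖u₁‖ * ‖u₂‖ ≤ ‖u₁‖ * ‖u₂ - t u₁‖
  have h1' := sin_angle_le u₁ u₂ t
  have hub : ‖g u₂‖ ≤ ‖(g : V →L[ℝ] V)‖ * ‖u₂‖ := (g : V →L[ℝ] V).le_opNorm _
  -- combine
  have hsin' : Real.sin (angle (g u₁) (g u₂)) * ‖g u₂‖ = ‖g u₂ - t • g u₁‖ := by
    have := heq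
    field_simp at this ⊢
    nlinarith [this]
  have hsin : Real.sin (angle u₁ u₂) * ‖u₂‖ ≤ ‖u₂ - t • u₁‖ := by
    nlinarith [h1']
  calc Real.sin (angle u₁ u₂)
      = Real.sin (angle u₁ u₂) * ‖u₂‖ / ‖u₂‖ := by field_simp
    _ ≤ ‖u₂ - t • u₁‖ / ‖u₂‖ := by gcongr
    _ ≤ ‖(g.symm : V →L[ℝ] V)‖ * ‖g u₂ - t • g u₁‖ / ‖u₂‖ := by gcongr
    _ = ‖(g.symm : V →L[ℝ] V)‖ * (Real.sin (angle (g u₁) (g u₂)) * ‖g u₂‖) / ‖u₂‖ := by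
        rw [hsin']
    _ ≤ ‖(g.symm : V →L[ℝ] V)‖ * (Real.sin (angle (g u₁) (g u₂)) *
          (‖(g : V →L[ℝ] V)‖ * ‖u₂‖)) / ‖u₂‖ := by
        gcongr
        exact Real.sin_nonneg_of_nonneg_of_le_pi (angle_nonneg _ _) (angle_le_pi _ _)
    _ = Real.sin (angle (g u₁) (g u₂)) * (‖(g : V →L[ℝ] V)‖ * ‖(g.symm : V →L[ℝ] V)‖) := by
        field_simp

lemma sin_pos_of_li {u₁ u₂ : V} (h : LinearIndependent ℝ ![u₁, u₂]) :
    0 < Real.sin (angle u₁ u₂) := by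
  have h1 : u₁ ≠ 0 := by
    have := h.ne_zero 0; simpa using this
  have h2 : ∀ a : ℝ, a • u₁ ≠ u₂ := (LinearIndependent.pair_iff' h1).1 h
  set t := ⟪u₁, u₂⟫ / ⟪u₁, u₁⟫ with ht
  have hne : u₂ - t • u₁ ≠ 0 := fun hc => h2 t (sub_eq_zero.1 hc).symm
  have heq := sin_angle_eq u₁ u₂ h1
  rw [← ht] at heq
  have h2' : u₂ ≠ 0 := by
    have := h.ne_zero 1; simpa using this
  have hn1 : (0:ℝ) < ‖u₁‖ := norm_pos_iff.2 h1
  have hn2 : (0:ℝ) < ‖u₂‖ := norm_pos_iff.2 h2'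
  have hn3 : (0:ℝ) < ‖u₂ - t • u₁‖ := norm_pos_iff.2 hne
  nlinarith [heq, mul_pos hn1 hn3, mul_pos hn1 hn2]

/-- For an invertible linear map `g` of the Euclidean plane and two distinct lines
(spanned by linearly independent vectors `u₁, u₂`), the angles `θ' = ∠(gu₁, gu₂)` and
`θ = ∠(u₁, u₂)` satisfy `|log sin θ' − log sin θ| ≤ log ‖g‖ + log ‖g⁻¹‖`. -/
theorem log_sin_angle_distortion
    (g : EuclideanSpace ℝ (Fin 2) ≃L[ℝ] EuclideanSpace ℝ (Fin 2))
    (u₁ u₂ : EuclideanSpace ℝ (Fin 2)) (h : LinearIndependent ℝ ![u₁, u₂]) :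
    |Real.log (Real.sin (angle (g u₁) (g u₂))) - Real.log (Real.sin (angle u₁ u₂))| ≤
      Real.log ‖(g : EuclideanSpace ℝ (Fin 2) →L[ℝ] EuclideanSpace ℝ (Fin 2))‖ +
        Real.log ‖(g.symm : EuclideanSpace ℝ (Fin 2) →L[ℝ] EuclideanSpace ℝ (Fin 2))‖ := by
  have h1 : u₁ ≠ 0 := by have := h.ne_zero 0; simpa using this
  have h2 : u₂ ≠ 0 := by have := h.ne_zero 1; simpa using this
  have hg1 : g u₁ ≠ 0 := by simpa using h1
  have hg2 : g u₂ ≠ 0 := by simpa using h2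
  set A := ‖(g : EuclideanSpace ℝ (Fin 2) →L[ℝ] EuclideanSpace ℝ (Fin 2))‖ with hA
  set B := ‖(g.symm : EuclideanSpace ℝ (Fin 2) →L[ℝ] EuclideanSpace ℝ (Fin 2))‖ with hB
  have hApos : 0 < A := by
    refine lt_of_lt_of_le (div_pos (norm_pos_iff.2 hg1) (norm_pos_iff.2 h1)) ?_
    rw [div_le_iff₀ (norm_pos_iff.2 h1)]
    exact (g : EuclideanSpace ℝ (Fin 2) →L[ℝ] EuclideanSpace ℝ (Fin 2)).le_opNorm _
  have hBpos : 0 < B := by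
    refine lt_of_lt_of_le (div_pos (norm_pos_iff.2 h1) (norm_pos_iff.2 hg1)) ?_
    rw [div_le_iff₀ (norm_pos_iff.2 hg1)]
    calc ‖u₁‖ = ‖g.symm (g u₁)‖ := by simp
      _ ≤ B * ‖g u₁‖ := (g.symm : EuclideanSpace ℝ (Fin 2) →L[ℝ]
          EuclideanSpace ℝ (Fin 2)).le_opNorm _
  set s := Real.sin (angle u₁ u₂) with hs
  set s' := Real.sin (angle (g u₁) (g u₂)) with hs'
  have hspos : 0 < s := sin_pos_of_li h
  have hkey1 : s ≤ s' * (A * B) := key g u₁ u₂ h1 h2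
  have hkey2 : s' ≤ s * (B * A) := by
    have := key g.symm (g u₁) (g u₂) hg1 hg2
    simpa using this
  have hs'pos : 0 < s' := by nlinarith [hkey1, hspos, mul_pos hApos hBpos]
  have l1 : Real.log s' ≤ Real.log s + (Real.log A + Real.log B) := by
    calc Real.log s' ≤ Real.log (s * (B * A)) := Real.log_le_log hs'pos hkey2
      _ = Real.log s + (Real.log A + Real.log B) := by
          rw [Real.log_mul (ne_of_gt hspos) (ne_of_gt (mul_pos hBpos hApos)),
            Real.log_mul (ne_of_gt hBpos) (ne_of_gt hApos)]
          ring
  have l2 : Real.log s ≤ Real.log s' + (Real.log A + Real.log B) := by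
    calc Real.log s ≤ Real.log (s' * (A * B)) := Real.log_le_log hspos hkey1
      _ = Real.log s' + (Real.log A + Real.log B) := by
          rw [Real.log_mul (ne_of_gt hs'pos) (ne_of_gt (mul_pos hApos hBpos)),
            Real.log_mul (ne_of_gt hApos) (ne_of_gt hBpos)]
  rw [abs_sub_le_iff]
  constructor <;> linarith
end

section
/- Let u₁, u₂ be unit vectors in ℝ² with u₁ ≠ ±u₂ and angle θ = ∠(u₁,u₂), and v₁, v₂ unit vectors with v₁ ≠ ±v₂ and angle θ'. Let g ∈ GL_2(ℝ) be the unique linear map sending u₁ ↦ v₁ and u₂ ↦ v₂. Then the singular values of g are sin(θ'/2)/sin(θ/2) and cos(θ'/2)/cos(θ/2). -/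
/-!
The diagonals `u₁ + u₂` and `u₁ - u₂` of the rhombus spanned by two unit vectors are orthogonal,
of lengths `2 cos (θ / 2)` and `2 sin (θ / 2)`. The map `g` sends them to the diagonals
`v₁ ± v₂` of the second rhombus, which are again orthogonal. A linear map of the plane sending an
orthogonal basis to an orthogonal pair is diagonal in the normalized bases, so its singular values
are the two stretch factors `cos (θ' / 2) / cos (θ / 2)` and `sin (θ' / 2) / sin (θ / 2)`.
-/

open InnerProductGeometry RealInnerProductSpace Module

section OrthogonalPair

variable {E F : Type*} [NormedAddCommGroup E] [InnerProductSpace ℝ E]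
  [NormedAddCommGroup F] [InnerProductSpace ℝ F]

theorem norm_smul_add_smul_sq_of_inner_eq_zero {p q : E} (hpq : ⟪p, q⟫ = 0) (a b : ℝ) :
    ‖a • p + b • q‖ ^ 2 = a ^ 2 * ‖p‖ ^ 2 + b ^ 2 * ‖q‖ ^ 2 := by
  rw [sq, norm_add_sq_eq_norm_sq_add_norm_sq_real (by simp [real_inner_smul_left,
    real_inner_smul_right, hpq]), norm_smul, norm_smul, Real.norm_eq_abs, Real.norm_eq_abs]
  nlinarith [sq_abs a, sq_abs b]

theorem span_pair_eq_top_of_inner_eq_zero (hE : finrank ℝ E = 2) {p q : E} (hp : p ≠ 0)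
    (hq : q ≠ 0) (hpq : ⟪p, q⟫ = 0) : Submodule.span ℝ {p, q} = ⊤ := by
  have hli : LinearIndependent ℝ ![p, q] :=
    linearIndependent_of_ne_zero_of_inner_eq_zero (by simp [Fin.forall_fin_two, hp, hq])
      (by simp [Pairwise, Fin.forall_fin_two, hpq, real_inner_comm])
  rw [← Matrix.range_cons_cons_empty p q ![]]
  exact hli.span_eq_top_of_card_eq_finrank (by simp [hE])

theorem ContinuousLinearMap.opNorm_eq_max_of_inner_eq_zero (hE : finrank ℝ E = 2)
    (f : E →L[ℝ] F) {p q : E} (hp : p ≠ 0) (hq : q ≠ 0) (hpq : ⟪p, q⟫ = 0)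
    (hfpq : ⟪f p, f q⟫ = 0) : ‖f‖ = max (‖f p‖ / ‖p‖) (‖f q‖ / ‖q‖) := by
  have hp' : 0 < ‖p‖ := norm_pos_iff.mpr hp
  have hq' : 0 < ‖q‖ := norm_pos_iff.mpr hq
  set M := max (‖f p‖ / ‖p‖) (‖f q‖ / ‖q‖)
  have hM : 0 ≤ M := le_max_of_le_left (by positivity)
  refine le_antisymm (f.opNorm_le_bound hM fun x => ?_) (max_le ?_ ?_)
  · obtain ⟨a, b, rfl⟩ := Submodule.mem_span_pair.mp
      ((span_pair_eq_top_of_inner_eq_zero hE hp hq hpq).ge (Submodule.mem_top (x := x)))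
    have hfp : ‖f p‖ ≤ M * ‖p‖ := (div_le_iff₀ hp').mp (le_max_left _ _)
    have hfq : ‖f q‖ ≤ M * ‖q‖ := (div_le_iff₀ hq').mp (le_max_right _ _)
    refine le_of_sq_le_sq ?_ (by positivity)
    rw [map_add, map_smul, map_smul, mul_pow, norm_smul_add_smul_sq_of_inner_eq_zero hfpq,
      norm_smul_add_smul_sq_of_inner_eq_zero hpq]
    nlinarith [pow_le_pow_left₀ (norm_nonneg _) hfp 2, pow_le_pow_left₀ (norm_nonneg _) hfq 2,
      sq_nonneg a, sq_nonneg b]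
  · exact (div_le_iff₀ hp').mpr (f.le_opNorm p)
  · exact (div_le_iff₀ hq').mpr (f.le_opNorm q)

theorem inv_max_of_pos {a b : ℝ} (ha : 0 < a) (hb : 0 < b) : (max a b)⁻¹ = min a⁻¹ b⁻¹ :=
  AntitoneOn.map_max (s := Set.Ioi 0) (fun _ hx _ _ hxy => inv_anti₀ hx hxy) ha hb

theorem ContinuousLinearEquiv.inv_norm_symm_eq_min_of_inner_eq_zero (hE : finrank ℝ E = 2)
    (g : E ≃L[ℝ] F) {p q : E} (hp : p ≠ 0) (hq : q ≠ 0) (hpq : ⟪p, q⟫ = 0)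
    (hgpq : ⟪g p, g q⟫ = 0) :
    ‖(g.symm : F →L[ℝ] E)‖⁻¹ = min (‖g p‖ / ‖p‖) (‖g q‖ / ‖q‖) := by
  have hF : finrank ℝ F = 2 := g.toLinearEquiv.finrank_eq.symm.trans hE
  have hgp : g p ≠ 0 := g.map_ne_zero_iff.mpr hp
  have hgq : g q ≠ 0 := g.map_ne_zero_iff.mpr hq
  rw [ContinuousLinearMap.opNorm_eq_max_of_inner_eq_zero hF _ hgp hgq hgpq (by simpa using hpq)]
  simp only [ContinuousLinearEquiv.coe_coe, ContinuousLinearEquiv.symm_apply_apply]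
  rw [inv_max_of_pos (div_pos (norm_pos_iff.mpr hp) (norm_pos_iff.mpr hgp))
    (div_pos (norm_pos_iff.mpr hq) (norm_pos_iff.mpr hgq)), inv_div, inv_div]

end OrthogonalPair

section HalfAngle

variable {V : Type*} [NormedAddCommGroup V] [InnerProductSpace ℝ V] {x y : V}

theorem inner_eq_cos_two_mul_half_angle (hx : ‖x‖ = 1) (hy : ‖y‖ = 1) :
    ⟪x, y⟫ = Real.cos (2 * (angle x y / 2)) := by
  rw [← cos_angle_mul_norm_mul_norm, hx, hy, mul_div_cancel₀ _ two_ne_zero, mul_one, mul_one]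

theorem norm_add_eq_two_mul_cos_half_angle (hx : ‖x‖ = 1) (hy : ‖y‖ = 1) :
    ‖x + y‖ = 2 * Real.cos (angle x y / 2) := by
  have hcos : 0 ≤ Real.cos (angle x y / 2) := Real.cos_nonneg_of_mem_Icc
    ⟨by linarith [angle_nonneg x y, Real.pi_pos], by linarith [angle_le_pi x y]⟩
  refine (sq_eq_sq₀ (norm_nonneg _) (by positivity)).mp ?_
  rw [norm_add_sq_real, hx, hy, inner_eq_cos_two_mul_half_angle hx hy, Real.cos_two_mul]
  ring

theorem norm_sub_eq_two_mul_sin_half_angle (hx : ‖x‖ = 1) (hy : ‖y‖ = 1) :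
    ‖x - y‖ = 2 * Real.sin (angle x y / 2) := by
  have hsin : 0 ≤ Real.sin (angle x y / 2) := Real.sin_nonneg_of_nonneg_of_le_pi
    (by linarith [angle_nonneg x y]) (by linarith [angle_le_pi x y, Real.pi_pos])
  refine (sq_eq_sq₀ (norm_nonneg _) (by positivity)).mp ?_
  rw [norm_sub_sq_real, hx, hy, inner_eq_cos_two_mul_half_angle hx hy, Real.cos_two_mul,
    Real.cos_sq']
  ring

end HalfAngle

theorem singular_values_of_rhombus_map_general
    (u₁ u₂ v₁ v₂ : EuclideanSpace ℝ (Fin 2))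
    (hu₁ : ‖u₁‖ = 1) (hu₂ : ‖u₂‖ = 1) (hv₁ : ‖v₁‖ = 1) (hv₂ : ‖v₂‖ = 1)
    (hu : u₁ ≠ u₂ ∧ u₁ ≠ -u₂)
    (g : EuclideanSpace ℝ (Fin 2) ≃L[ℝ] EuclideanSpace ℝ (Fin 2))
    (hg₁ : g u₁ = v₁) (hg₂ : g u₂ = v₂) :
    ‖(g : EuclideanSpace ℝ (Fin 2) →L[ℝ] EuclideanSpace ℝ (Fin 2))‖ =
        max (Real.sin (angle v₁ v₂ / 2) / Real.sin (angle u₁ u₂ / 2))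
          (Real.cos (angle v₁ v₂ / 2) / Real.cos (angle u₁ u₂ / 2)) ∧
      ‖(g.symm : EuclideanSpace ℝ (Fin 2) →L[ℝ] EuclideanSpace ℝ (Fin 2))‖⁻¹ =
        min (Real.sin (angle v₁ v₂ / 2) / Real.sin (angle u₁ u₂ / 2))
          (Real.cos (angle v₁ v₂ / 2) / Real.cos (angle u₁ u₂ / 2)) := by
  have hE : finrank ℝ (EuclideanSpace ℝ (Fin 2)) = 2 := finrank_euclideanSpace_fin
  have hu_add : u₁ + u₂ ≠ 0 := fun h => hu.2 (add_eq_zero_iff_eq_neg.mp h)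
  have hu_sub : u₁ - u₂ ≠ 0 := sub_ne_zero.mpr hu.1
  have hg_add : g (u₁ + u₂) = v₁ + v₂ := by rw [map_add, hg₁, hg₂]
  have hg_sub : g (u₁ - u₂) = v₁ - v₂ := by rw [map_sub, hg₁, hg₂]
  have hu_diag : ⟪u₁ + u₂, u₁ - u₂⟫ = 0 :=
    (real_inner_add_sub_eq_zero_iff _ _).mpr (hu₁.trans hu₂.symm)
  have hv_diag : ⟪g (u₁ + u₂), g (u₁ - u₂)⟫ = 0 := by
    rw [hg_add, hg_sub]
    exact (real_inner_add_sub_eq_zero_iff _ _).mpr (hv₁.trans hv₂.symm)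
  have hmax := ContinuousLinearMap.opNorm_eq_max_of_inner_eq_zero hE
    (g : EuclideanSpace ℝ (Fin 2) →L[ℝ] EuclideanSpace ℝ (Fin 2)) hu_add hu_sub hu_diag hv_diag
  have hmin := g.inv_norm_symm_eq_min_of_inner_eq_zero hE hu_add hu_sub hu_diag hv_diag
  simp only [ContinuousLinearEquiv.coe_coe] at hmax
  rw [hg_add, hg_sub, norm_add_eq_two_mul_cos_half_angle hu₁ hu₂,
    norm_sub_eq_two_mul_sin_half_angle hu₁ hu₂, norm_add_eq_two_mul_cos_half_angle hv₁ hv₂,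
    norm_sub_eq_two_mul_sin_half_angle hv₁ hv₂, mul_div_mul_left _ _ two_ne_zero,
    mul_div_mul_left _ _ two_ne_zero] at hmax hmin
  exact ⟨hmax.trans (max_comm _ _), hmin.trans (min_comm _ _)⟩

/-- If `g` maps unit vectors `u₁ ↦ v₁`, `u₂ ↦ v₂` (with `u₁ ≠ ±u₂`, `v₁ ≠ ±v₂`),
`θ = ∠(u₁,u₂)` and `θ' = ∠(v₁,v₂)`, then the singular values of `g` are
`sin(θ'/2)/sin(θ/2)` and `cos(θ'/2)/cos(θ/2)`; equivalently, `‖g‖` is the larger and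
`‖g⁻¹‖⁻¹` the smaller of these two quantities. -/
theorem singular_values_of_rhombus_map
    (u₁ u₂ v₁ v₂ : EuclideanSpace ℝ (Fin 2))
    (hu₁ : ‖u₁‖ = 1) (hu₂ : ‖u₂‖ = 1) (hv₁ : ‖v₁‖ = 1) (hv₂ : ‖v₂‖ = 1)
    (hu : u₁ ≠ u₂ ∧ u₁ ≠ -u₂) (hv : v₁ ≠ v₂ ∧ v₁ ≠ -v₂)
    (g : EuclideanSpace ℝ (Fin 2) ≃L[ℝ] EuclideanSpace ℝ (Fin 2))
    (hg₁ : g u₁ = v₁) (hg₂ : g u₂ = v₂) :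
    ‖(g : EuclideanSpace ℝ (Fin 2) →L[ℝ] EuclideanSpace ℝ (Fin 2))‖ =
        max (Real.sin (angle v₁ v₂ / 2) / Real.sin (angle u₁ u₂ / 2))
          (Real.cos (angle v₁ v₂ / 2) / Real.cos (angle u₁ u₂ / 2)) ∧
      ‖(g.symm : EuclideanSpace ℝ (Fin 2) →L[ℝ] EuclideanSpace ℝ (Fin 2))‖⁻¹ =
        min (Real.sin (angle v₁ v₂ / 2) / Real.sin (angle u₁ u₂ / 2))
          (Real.cos (angle v₁ v₂ / 2) / Real.cos (angle u₁ u₂ / 2)) :=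
  singular_values_of_rhombus_map_general u₁ u₂ v₁ v₂ hu₁ hu₂ hv₁ hv₂ hu g hg₁ hg₂
end

section
/- Let g ∈ GL_2(ℝ) have singular values s₁ = sin(θ'/2)/sin(θ/2) and s₂ = cos(θ'/2)/cos(θ/2) for some θ, θ' ∈ (0, π/2]. Then log max(‖g‖, ‖g⁻¹‖) = |log sin(θ'/2) − log sin(θ/2)|. -/
/-- If `g ∈ GL₂(ℝ)` has singular values `s₁ = sin(θ'/2)/sin(θ/2)` and
`s₂ = cos(θ'/2)/cos(θ/2)` for some `θ, θ' ∈ (0, π/2]` (so that `‖g‖ = max s₁ s₂` and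
`‖g⁻¹‖⁻¹ = min s₁ s₂`), then `log max(‖g‖, ‖g⁻¹‖) = |log sin(θ'/2) − log sin(θ/2)|`. -/
theorem log_max_norm_eq_abs_log_sin
    (g : EuclideanSpace ℝ (Fin 2) ≃L[ℝ] EuclideanSpace ℝ (Fin 2))
    (θ θ' : ℝ) (hθ : θ ∈ Set.Ioc 0 (Real.pi / 2)) (hθ' : θ' ∈ Set.Ioc 0 (Real.pi / 2))
    (hnorm : ‖(g : EuclideanSpace ℝ (Fin 2) →L[ℝ] EuclideanSpace ℝ (Fin 2))‖ =
      max (Real.sin (θ' / 2) / Real.sin (θ / 2)) (Real.cos (θ' / 2) / Real.cos (θ / 2)))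
    (hnorminv : ‖(g.symm : EuclideanSpace ℝ (Fin 2) →L[ℝ] EuclideanSpace ℝ (Fin 2))‖⁻¹ =
      min (Real.sin (θ' / 2) / Real.sin (θ / 2)) (Real.cos (θ' / 2) / Real.cos (θ / 2))) :
    Real.log (max ‖(g : EuclideanSpace ℝ (Fin 2) →L[ℝ] EuclideanSpace ℝ (Fin 2))‖
        ‖(g.symm : EuclideanSpace ℝ (Fin 2) →L[ℝ] EuclideanSpace ℝ (Fin 2))‖) =
      |Real.log (Real.sin (θ' / 2)) - Real.log (Real.sin (θ / 2))| := by
  obtain ⟨hθ0, hθπ⟩ := hθ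
  obtain ⟨hθ'0, hθ'π⟩ := hθ'
  have hπ := Real.pi_pos
  have hs : 0 < Real.sin (θ / 2) := Real.sin_pos_of_pos_of_lt_pi (by linarith) (by linarith)
  have hs' : 0 < Real.sin (θ' / 2) := Real.sin_pos_of_pos_of_lt_pi (by linarith) (by linarith)
  have hc : 0 < Real.cos (θ / 2) := Real.cos_pos_of_mem_Ioo ⟨by linarith, by linarith⟩
  have hc' : 0 < Real.cos (θ' / 2) := Real.cos_pos_of_mem_Ioo ⟨by linarith, by linarith⟩
  set a := Real.sin (θ' / 2) / Real.sin (θ / 2) with ha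
  set b := Real.cos (θ' / 2) / Real.cos (θ / 2) with hb
  have hap : 0 < a := div_pos hs' hs
  have hbp : 0 < b := div_pos hc' hc
  have hga : ‖(g.symm : EuclideanSpace ℝ (Fin 2) →L[ℝ] EuclideanSpace ℝ (Fin 2))‖
      = (min a b)⁻¹ := by
    rw [← hnorminv, inv_inv]
  rcases le_total θ θ' with h | h
  · -- θ ≤ θ', so a ≥ 1 ≥ b, min a b = b
    have hsle : Real.sin (θ / 2) ≤ Real.sin (θ' / 2) :=
      Real.sin_le_sin_of_le_of_le_pi_div_two (by linarith) (by linarith) (by linarith)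
    have hcle : Real.cos (θ' / 2) ≤ Real.cos (θ / 2) :=
      Real.cos_le_cos_of_nonneg_of_le_pi (by linarith) (by linarith) (by linarith)
    have hsin : Real.sin θ ≤ Real.sin θ' :=
      Real.sin_le_sin_of_le_of_le_pi_div_two (by linarith) (by linarith) h
    have hsin2 : Real.sin (θ/2) * Real.cos (θ/2) ≤ Real.sin (θ'/2) * Real.cos (θ'/2) := by
      have h1 := Real.sin_two_mul (θ/2)
      have h2 := Real.sin_two_mul (θ'/2)
      rw [show (2:ℝ) * (θ/2) = θ by ring] at h1
      rw [show (2:ℝ) * (θ'/2) = θ' by ring] at h2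
      nlinarith [hsin]
    have ha1 : 1 ≤ a := (one_le_div hs).2 hsle
    have hb1 : b ≤ 1 := (div_le_one hc).2 hcle
    have hba : b ≤ a := hb1.trans ha1
    have hbinv : b⁻¹ ≤ a := by
      rw [hb, ha]
      rw [inv_div, div_le_div_iff₀ hc' hs]
      nlinarith
    have hmin : min a b = b := min_eq_right hba
    rw [hnorm, hga, hmin, max_eq_left hba, max_eq_left hbinv, ha, Real.log_div hs'.ne' hs.ne']
    rw [abs_of_nonneg (by linarith [Real.log_le_log hs hsle])]
  · -- θ' ≤ θ
    have hsle : Real.sin (θ' / 2) ≤ Real.sin (θ / 2) :=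
      Real.sin_le_sin_of_le_of_le_pi_div_two (by linarith) (by linarith) (by linarith)
    have hcle : Real.cos (θ / 2) ≤ Real.cos (θ' / 2) :=
      Real.cos_le_cos_of_nonneg_of_le_pi (by linarith) (by linarith) (by linarith)
    have hsin : Real.sin θ' ≤ Real.sin θ :=
      Real.sin_le_sin_of_le_of_le_pi_div_two (by linarith) (by linarith) h
    have hsin2 : Real.sin (θ'/2) * Real.cos (θ'/2) ≤ Real.sin (θ/2) * Real.cos (θ/2) := by
      have h1 := Real.sin_two_mul (θ/2)
      have h2 := Real.sin_two_mul (θ'/2)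
      rw [show (2:ℝ) * (θ/2) = θ by ring] at h1
      rw [show (2:ℝ) * (θ'/2) = θ' by ring] at h2
      nlinarith [hsin]
    have ha1 : a ≤ 1 := (div_le_one hs).2 hsle
    have hb1 : 1 ≤ b := (one_le_div hc).2 hcle
    have hab : a ≤ b := ha1.trans hb1
    have hbinv : b ≤ a⁻¹ := by
      rw [hb, ha, inv_div, div_le_div_iff₀ hc hs']
      nlinarith
    have hmin : min a b = a := min_eq_left hab
    have h1 : max a b = b := max_eq_right hab
    rw [hnorm, hga, hmin, h1, max_eq_right hbinv, Real.log_inv, ha,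
      Real.log_div hs'.ne' hs.ne']
    rw [abs_of_nonpos (by linarith [Real.log_le_log hs' hsle])]
end

section
/- Kac's lemma: Let T be an ergodic measure-preserving automorphism of a probability space (Ω, μ) and B a set of positive measure. For k ≥ 1 let B_k be the set of points of B whose first return time to B equals k. Then ∑_{k≥1} k·μ(B_k) = 1. -/
open MeasureTheory

/-- Kac's lemma: for an ergodic measure-preserving automorphism `T` of a probability
space and a set `B` of positive measure, with `B_k` the set of points of `B` whose
first return time to `B` equals `k`, one has `∑_{k≥1} k·μ(B_k) = 1`. -/
theorem kac_lemma {Ω : Type*} [MeasurableSpace Ω]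
    (μ : Measure Ω) [IsProbabilityMeasure μ] (T S : Ω → Ω)
    (hT : MeasurePreserving T μ μ) (hErg : Ergodic T μ)
    (hS : Measurable S)
    (hST : Function.LeftInverse S T) (hTS : Function.RightInverse S T)
    (B : Set Ω) (hB : MeasurableSet B) (hBpos : 0 < μ B) :
    ∑' k : ℕ, ((k + 1 : ℕ) : ENNReal) *
        μ ((B ∩ T^[k + 1] ⁻¹' B) \ ⋃ i ∈ Finset.Ico 1 (k + 1), T^[i] ⁻¹' B) = 1 := by
  classical
  -- the set of points of `B` with first return time `k+1`
  set D : ℕ → Set Ω := fun k =>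
    (B ∩ T^[k + 1] ⁻¹' B) \ ⋃ i ∈ Finset.Ico 1 (k + 1), T^[i] ⁻¹' B with hD
  have hmB : ∀ i, MeasurableSet (T^[i] ⁻¹' B) := fun i => (hT.iterate i).measurable hB
  have hDmem : ∀ k x, x ∈ D k ↔
      x ∈ B ∧ T^[k + 1] x ∈ B ∧ ∀ i, 1 ≤ i → i ≤ k → T^[i] x ∉ B := by
    intro k x
    simp only [hD, Set.mem_diff, Set.mem_inter_iff, Set.mem_iUnion, Finset.mem_Ico,
      Set.mem_preimage, not_exists]
    constructor
    · rintro ⟨⟨h1, h2⟩, h3⟩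
      exact ⟨h1, h2, fun i hi1 hi2 hmem => h3 i ⟨hi1, Nat.lt_succ_of_le hi2⟩ hmem⟩
    · rintro ⟨h1, h2, h3⟩
      exact ⟨⟨h1, h2⟩, fun i hi => h3 i hi.1 (Nat.lt_succ_iff.mp hi.2)⟩
  have hDm : ∀ k, MeasurableSet (D k) := by
    intro k
    exact ((hB.inter (hmB (k + 1))).diff
      (Finset.measurableSet_biUnion _ fun i _ => hmB i))
  -- `E n` : points that do not visit `B` at times `1, ..., n`
  set E : ℕ → Set Ω := fun n => {x | ∀ i, 1 ≤ i → i ≤ n → T^[i] x ∉ B} with hE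
  have hEeq : ∀ n, E n = ⋂ i ∈ Finset.Icc 1 n, (T^[i] ⁻¹' B)ᶜ := by
    intro n
    ext x
    simp only [hE, Set.mem_setOf_eq, Set.mem_iInter, Set.mem_compl_iff,
      Set.mem_preimage, Finset.mem_Icc]
    exact ⟨fun h i hi => h i hi.1 hi.2, fun h i h1 h2 => h i ⟨h1, h2⟩⟩
  have hEm : ∀ n, MeasurableSet (E n) := by
    intro n
    rw [hEeq]
    exact Finset.measurableSet_biInter _ fun i _ => (hmB i).compl
  have hEanti : Antitone E := by
    intro m n hmn x hx
    exact fun i hi1 hi2 => hx i hi1 (hi2.trans hmn)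
  have hE0 : E 0 = Set.univ := by
    ext x; simp [hE]; intro i h1 h2; omega
  -- the set of points never returning to `B`
  set N : Set Ω := {x | ∀ i, 1 ≤ i → T^[i] x ∉ B} with hN
  have hNInter : N = ⋂ n, E n := by
    ext x
    simp only [hN, hE, Set.mem_iInter, Set.mem_setOf_eq]
    exact ⟨fun h n i h1 _ => h i h1, fun h i h1 => h i i h1 le_rfl⟩
  -- `N` is null, by ergodicity
  have hNnull : μ N = 0 := by
    set A : Set Ω := ⋃ i : ℕ, T^[i + 1] ⁻¹' B with hA
    have hAm : MeasurableSet A := MeasurableSet.iUnion fun i => hmB (i + 1)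
    have hNA : N = Aᶜ := by
      ext x
      simp only [hN, hA, Set.mem_compl_iff, Set.mem_iUnion, Set.mem_preimage,
        Set.mem_setOf_eq, not_exists]
      constructor
      · intro h i; exact h (i + 1) (Nat.le_add_left 1 i)
      · intro h i h1
        obtain ⟨j, rfl⟩ := Nat.exists_eq_add_of_le h1
        have := h j
        rwa [Nat.add_comm 1 j]
    have hTA : T ⁻¹' A ⊆ A := by
      intro x hx
      simp only [hA, Set.mem_preimage, Set.mem_iUnion] at hx ⊢
      obtain ⟨i, hi⟩ := hx
      exact ⟨i + 1, by rwa [Function.iterate_succ_apply]⟩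
    set C : ℕ → Set Ω := fun n => T^[n] ⁻¹' A with hC
    have hCanti : Antitone C := by
      refine antitone_nat_of_succ_le fun n => ?_
      intro x hx
      simp only [hC, Set.mem_preimage] at hx ⊢
      rw [Function.iterate_succ_apply'] at hx
      exact hTA hx
    have hCm : ∀ n, MeasurableSet (C n) := fun n => (hT.iterate n).measurable hAm
    have hCmeas : ∀ n, μ (C n) = μ A := fun n =>
      (hT.iterate n).measure_preimage hAm.nullMeasurableSet
    set W : Set Ω := ⋂ n, C n with hW
    have hWinv : T ⁻¹' W = W := by
      ext x
      simp only [hW, hC, Set.mem_preimage, Set.mem_iInter]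
      constructor
      · intro hx n
        have h := hx n
        rw [← Function.iterate_succ_apply, Function.iterate_succ_apply'] at h
        exact hTA h
      · intro hx n
        rw [← Function.iterate_succ_apply]
        exact hx (n + 1)
    have hWm : MeasurableSet W := MeasurableSet.iInter hCm
    have hWmeas : μ W = μ A := by
      rw [hW, hCanti.measure_iInter (fun n => (hCm n).nullMeasurableSet)
        ⟨0, measure_ne_top μ _⟩]
      simp [hCmeas]
    have hApos : 0 < μ A := by
      refine lt_of_lt_of_le ?_ (measure_mono (Set.subset_iUnion (fun i => T^[i + 1] ⁻¹' B) 0))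
      rwa [(hT.iterate 1).measure_preimage hB.nullMeasurableSet]
    rcases hErg.ae_empty_or_univ hWm hWinv with h | h
    · exfalso
      have : μ W = 0 := by
        rw [measure_congr h]; simp
      rw [hWmeas] at this
      exact absurd this hApos.ne'
    · have hA1 : μ A = 1 := by
        rw [← hWmeas, measure_congr h, measure_univ]
      rw [hNA, measure_compl hAm (measure_ne_top μ A), hA1, measure_univ]
      simp
  -- the key recursion: `E (n+1) = T ⁻¹' (E n \ B)`
  have hErec : ∀ n, E (n + 1) = T ⁻¹' (E n \ B) := by
    intro n
    ext x
    simp only [hE, Set.mem_preimage, Set.mem_diff, Set.mem_setOf_eq]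
    constructor
    · intro h
      refine ⟨fun i h1 h2 => ?_, ?_⟩
      · rw [← Function.iterate_succ_apply]
        exact h (i + 1) (Nat.le_add_left 1 i) (by omega)
      · have := h 1 le_rfl (by omega)
        simpa using this
    · rintro ⟨h1, h2⟩ i hi1 hi2
      rcases Nat.exists_eq_add_of_le hi1 with ⟨j, rfl⟩
      rcases Nat.eq_zero_or_pos j with rfl | hj
      · simpa using h2
      · have h := h1 j hj (by omega)
        rw [← Function.iterate_succ_apply] at h
        rwa [Nat.add_comm 1 j]
  have hEstep : ∀ n, μ (E n ∩ B) + μ (E (n + 1)) = μ (E n) := by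
    intro n
    have : μ (E (n + 1)) = μ (E n \ B) := by
      rw [hErec n]
      exact hT.measure_preimage ((hEm n).diff hB).nullMeasurableSet
    rw [this]
    exact measure_inter_add_diff (E n) hB
  -- telescoping partial sums
  have htel : ∀ m : ℕ, ∑ n ∈ Finset.range m, μ (E n ∩ B) + μ (E m) = 1 := by
    intro m
    induction m with
    | zero => simp [hE0]
    | succ m ih =>
      rw [Finset.sum_range_succ, add_assoc, hEstep m, ih]
  have hsumEB : ∑' n : ℕ, μ (E n ∩ B) = 1 := by
    rw [ENNReal.tsum_eq_iSup_nat]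
    have h1 : ∀ m : ℕ, ∑ n ∈ Finset.range m, μ (E n ∩ B) = 1 - μ (E m) := by
      intro m
      have := htel m
      exact ENNReal.eq_sub_of_add_eq (measure_ne_top μ _) this
    have h2 : (⨅ m : ℕ, μ (E m)) = 0 := by
      rw [← hEanti.measure_iInter (fun n => (hEm n).nullMeasurableSet)
        ⟨0, measure_ne_top μ _⟩, ← hNInter, hNnull]
    calc (⨆ m : ℕ, ∑ n ∈ Finset.range m, μ (E n ∩ B))
        = ⨆ m : ℕ, (1 - μ (E m)) := by simp_rw [h1]
      _ = 1 - ⨅ m : ℕ, μ (E m) := (ENNReal.sub_iInf).symm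
      _ = 1 := by rw [h2, tsub_zero]
  -- the double-counting family
  set f : ℕ → ℕ → Set Ω := fun j k => if j ≤ k then D k else ∅ with hf
  have hfm : ∀ j k, MeasurableSet (f j k) := by
    intro j k
    simp only [hf]
    split
    · exact hDm k
    · exact MeasurableSet.empty
  -- The sets `D k` are pairwise disjoint
  have hDdisj : ∀ k l, k < l → Disjoint (D k) (D l) := by
    intro k l hkl
    rw [Set.disjoint_left]
    intro x hxk hxl
    rw [hDmem] at hxk hxl
    exact hxl.2.2 (k + 1) (Nat.le_add_left 1 k) (by omega) hxk.2.1
  have hfdisj : ∀ j, Pairwise (Function.onFun Disjoint (f j)) := by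
    intro j k l hkl
    simp only [hf, Function.onFun]
    rcases Nat.lt_or_ge k l with h | h
    · split
      · split
        · exact hDdisj k l h
        · exact Set.disjoint_empty _
      · exact Set.empty_disjoint _
    · have h' : l < k := lt_of_le_of_ne h (Ne.symm hkl)
      split
      · split
        · exact (hDdisj l k h').symm
        · exact Set.disjoint_empty _
      · exact Set.empty_disjoint _
  -- the union of the `D k`, `k ≥ j`, is a.e. equal to `E j ∩ B`
  have hUnion : ∀ j : ℕ, μ (⋃ k, f j k) = μ (E j ∩ B) := by
    intro j
    have hsub : (⋃ k, f j k) ⊆ E j ∩ B := by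
      intro x hx
      rcases Set.mem_iUnion.mp hx with ⟨k, hk⟩
      simp only [hf] at hk
      split at hk
      · rename_i hjk
        rw [hDmem] at hk
        exact ⟨fun i hi1 hi2 => hk.2.2 i hi1 (hi2.trans hjk), hk.1⟩
      · exact absurd hk (Set.notMem_empty x)
    have hdiff : ((E j ∩ B) \ ⋃ k, f j k) ⊆ N := by
      intro x hx
      rcases hx with ⟨⟨hxE, hxB⟩, hxU⟩
      simp only [hN, Set.mem_setOf_eq]
      intro i hi1 hiB
      -- there is a return time; take the least one, deriving a contradiction
      have hex : ∃ m, 1 ≤ m ∧ T^[m] x ∈ B := ⟨i, hi1, hiB⟩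
      obtain ⟨hm1, hmB'⟩ := Nat.find_spec hex
      have hmmin : ∀ l, l < Nat.find hex → ¬(1 ≤ l ∧ T^[l] x ∈ B) :=
        fun l hl => Nat.find_min hex hl
      have hmj : j + 1 ≤ Nat.find hex := by
        by_contra hcon
        push_neg at hcon
        exact hxE (Nat.find hex) hm1 (by omega) hmB'
      obtain ⟨k, hk⟩ : ∃ k, Nat.find hex = k + 1 := ⟨Nat.find hex - 1, by omega⟩
      apply hxU
      refine Set.mem_iUnion.mpr ⟨k, ?_⟩
      simp only [hf, if_pos (show j ≤ k by omega)]
      rw [hDmem]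
      refine ⟨hxB, by rw [← hk]; exact hmB', fun i hi1 hi2 hB' => hmmin i (by omega) ⟨hi1, hB'⟩⟩
    have h1 : μ (E j ∩ B) ≤ μ (⋃ k, f j k) := by
      calc μ (E j ∩ B) ≤ μ ((⋃ k, f j k) ∪ N) := by
            apply measure_mono
            intro x hx
            by_cases hxU : x ∈ ⋃ k, f j k
            · exact Or.inl hxU
            · exact Or.inr (hdiff ⟨hx, hxU⟩)
        _ ≤ μ (⋃ k, f j k) + μ N := measure_union_le _ _
        _ = μ (⋃ k, f j k) := by rw [hNnull, add_zero]
    exact le_antisymm (measure_mono hsub) h1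
  -- now put everything together
  have hμf : ∀ j k, μ (f j k) = if j ≤ k then μ (D k) else 0 := by
    intro j k
    simp only [hf]
    split <;> simp
  show (∑' k : ℕ, ((k + 1 : ℕ) : ENNReal) * μ (D k)) = 1
  calc ∑' k : ℕ, ((k + 1 : ℕ) : ENNReal) * μ (D k)
      = ∑' k : ℕ, ∑' j : ℕ, μ (f j k) := by
        congr 1
        ext k
        rw [show (∑' j : ℕ, μ (f j k)) = ∑ j ∈ Finset.range (k + 1), μ (f j k) from
          tsum_eq_sum (fun j hj => by
            rw [hμf]
            rw [Finset.mem_range, not_lt] at hj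
            rw [if_neg (by omega)])]
        have : ∀ j ∈ Finset.range (k + 1), μ (f j k) = μ (D k) := by
          intro j hj
          rw [hμf, if_pos (Nat.lt_succ_iff.mp (Finset.mem_range.mp hj))]
        rw [Finset.sum_congr rfl this, Finset.sum_const, Finset.card_range, nsmul_eq_mul]
    _ = ∑' j : ℕ, ∑' k : ℕ, μ (f j k) := ENNReal.tsum_comm
    _ = ∑' j : ℕ, μ (⋃ k, f j k) := by
        congr 1
        ext j
        rw [measure_iUnion (hfdisj j) (hfm j)]
    _ = ∑' j : ℕ, μ (E j ∩ B) := by simp_rw [hUnion]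
    _ = 1 := hsumEB
end

section
/- Let (ξ_n)_{n≥1} be i.i.d. real random variables with E[ξ₁] < 0 and E[ξ₁²] < ∞, and let Z_n := ξ₁ + ··· + ξ_n (Z₀ = 0). Then sup_{n≥0} Z_n is integrable. -/
/-!
Let `M n = max_{k ≤ n} Z k`. Reversing the order of `ξ 0, …, ξ (n - 1)`, which does not change
their joint law, turns `M n` into `V n`, where `V` is the Lindley process
`V 0 = 0`, `V (n + 1) = max (V n + ξ n) 0`; and `V n` is independent of `ξ n`. Squaring the
recursion gives `E[V (n+1)²] ≤ E[V n²] + 2 E[V n] E[ξ] + E[ξ²]`, while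
`E[V (n+1)²] = E[M (n+1)²] ≥ E[M n²] = E[V n²]`. Hence `E[M n] = E[V n] ≤ E[ξ²] / (2 |E[ξ]|)`
for every `n`, and monotone convergence makes `sup_n Z n = sup_n M n` integrable.
-/

open MeasureTheory ProbabilityTheory Finset Function

noncomputable def partialSumMax (x : ℕ → ℝ) (n : ℕ) : ℝ :=
  (range (n + 1)).sup' nonempty_range_add_one fun k => ∑ i ∈ range k, x i

lemma sum_range_le_partialSumMax (x : ℕ → ℝ) {k n : ℕ} (hk : k ≤ n) :
    ∑ i ∈ range k, x i ≤ partialSumMax x n :=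
  le_sup' (fun k => ∑ i ∈ range k, x i) (mem_range.2 (Nat.lt_succ_of_le hk))

lemma partialSumMax_nonneg (x : ℕ → ℝ) (n : ℕ) : 0 ≤ partialSumMax x n := by
  simpa using sum_range_le_partialSumMax x (Nat.zero_le n)

lemma partialSumMax_mono (x : ℕ → ℝ) : Monotone (partialSumMax x) := fun _ _ hmn =>
  sup'_le _ _ fun _ hk => sum_range_le_partialSumMax x (by grind)

lemma partialSumMax_congr {x y : ℕ → ℝ} {n : ℕ} (h : ∀ i < n, x i = y i) :
    partialSumMax x n = partialSumMax y n :=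
  sup'_congr _ rfl fun _ hk => sum_congr rfl fun i hi => h i (by grind)

lemma partialSumMax_succ (x : ℕ → ℝ) (n : ℕ) :
    partialSumMax x (n + 1) = max (partialSumMax (fun i => x (i + 1)) n + x 0) 0 := by
  apply le_antisymm
  · refine sup'_le _ _ fun k hk => ?_
    cases k with
    | zero => simp
    | succ k =>
      rw [sum_range_succ']
      exact le_max_of_le_left
        (add_le_add_left (sum_range_le_partialSumMax _ (by grind)) _)
  · refine max_le ?_ (partialSumMax_nonneg x _)
    rw [← le_sub_iff_add_le]
    refine sup'_le _ _ fun k hk => ?_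
    rw [le_sub_iff_add_le, ← sum_range_succ' x]
    exact sum_range_le_partialSumMax x (by grind)

lemma measurable_partialSumMax (n : ℕ) : Measurable fun x : ℕ → ℝ => partialSumMax x n :=
  Finset.measurable_range_sup'' fun _ _ => by fun_prop

lemma iSup_partialSumMax (x : ℕ → ℝ) :
    ⨆ n, partialSumMax x n = ⨆ n, ∑ i ∈ range n, x i := by
  have le_M (n : ℕ) := sum_range_le_partialSumMax x (le_refl n)
  by_cases hS : BddAbove (Set.range fun n => ∑ i ∈ range n, x i)
  · have hM : BddAbove (Set.range (partialSumMax x)) :=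
      ⟨⨆ n, ∑ i ∈ range n, x i,
        Set.forall_mem_range.2 fun n => sup'_le _ _ fun k _ => le_ciSup hS k⟩
    exact le_antisymm (ciSup_le fun n => sup'_le _ _ fun k _ => le_ciSup hS k)
      (ciSup_le fun n => (le_M n).trans (le_ciSup hM n))
  · have hM : ¬BddAbove (Set.range (partialSumMax x)) := fun ⟨b, hb⟩ =>
      hS ⟨b, Set.forall_mem_range.2 fun n => (le_M n).trans (hb (Set.mem_range_self n))⟩
    rw [Real.iSup_of_not_bddAbove hS, Real.iSup_of_not_bddAbove hM]

def lindley (x : ℕ → ℝ) : ℕ → ℝ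
  | 0 => 0
  | n + 1 => max (lindley x n + x n) 0

def reflectBelow (n i : ℕ) : ℕ := if i < n then n - 1 - i else i

lemma reflectBelow_injective (n : ℕ) : Injective (reflectBelow n) := by
  intro i j h
  simp only [reflectBelow] at h
  split_ifs at h <;> omega

lemma lindley_eq_partialSumMax (x : ℕ → ℝ) (n : ℕ) :
    lindley x n = partialSumMax (x ∘ reflectBelow n) n := by
  induction n with
  | zero => simp [lindley, partialSumMax]
  | succ n ih =>
    rw [lindley, ih, partialSumMax_succ]
    congr 2
    · refine partialSumMax_congr fun i hi => ?_
      simp only [comp_apply, reflectBelow]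
      congr 1
      split_ifs <;> omega

lemma measurable_lindley (n : ℕ) : Measurable fun x : ℕ → ℝ => lindley x n := by
  induction n with
  | zero => exact measurable_const
  | succ n ih => exact (ih.add (measurable_pi_apply n)).max measurable_const

lemma dependsOn_lindley (n : ℕ) : DependsOn (fun x : ℕ → ℝ => lindley x n) (range n) := by
  intro x y h
  induction n with
  | zero => rfl
  | succ n ih =>
    simp only [coe_range, Set.mem_Iio] at h ih
    simp only [lindley]
    rw [ih fun i hi => h i (by omega), h n (by omega)]

section

variable {Ω : Type*} [MeasurableSpace Ω] {μ : Measure Ω}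

lemma ENNReal.ofReal_iSup_le {ι : Sort*} [Nonempty ι] (f : ι → ℝ) :
    ENNReal.ofReal (⨆ i, f i) ≤ ⨆ i, ENNReal.ofReal (f i) := by
  by_cases hf : BddAbove (Set.range f)
  · exact (Monotone.map_ciSup_of_continuousAt ENNReal.continuous_ofReal.continuousAt
      ENNReal.ofReal_mono hf).le
  · simp [Real.iSup_of_not_bddAbove hf]

lemma integrable_iSup_of_monotone {f : ℕ → Ω → ℝ} {C : ℝ} (hmeas : ∀ n, Measurable (f n))
    (hnonneg : ∀ n ω, 0 ≤ f n ω) (hmono : ∀ ω, Monotone (f · ω)) (hint : ∀ n, Integrable (f n) μ)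
    (hC : ∀ n, ∫ ω, f n ω ∂μ ≤ C) :
    Integrable (fun ω => ⨆ n, f n ω) μ := by
  refine (lintegral_ofReal_ne_top_iff_integrable (Measurable.iSup hmeas).aestronglyMeasurable
    (ae_of_all _ fun ω => Real.iSup_nonneg fun n => hnonneg n ω)).1
    (ne_top_of_le_ne_top (ENNReal.ofReal_ne_top (r := C)) ?_)
  calc ∫⁻ ω, ENNReal.ofReal (⨆ n, f n ω) ∂μ
      ≤ ∫⁻ ω, ⨆ n, ENNReal.ofReal (f n ω) ∂μ :=
        lintegral_mono fun ω => ENNReal.ofReal_iSup_le _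
    _ = ⨆ n, ∫⁻ ω, ENNReal.ofReal (f n ω) ∂μ :=
        lintegral_iSup (fun n => (hmeas n).ennreal_ofReal)
          fun _ _ hmn ω => ENNReal.ofReal_le_ofReal (hmono ω hmn)
    _ ≤ ENNReal.ofReal C := iSup_le fun n => by
        rw [← ofReal_integral_eq_lintegral_ofReal (hint n) (ae_of_all _ (hnonneg n))]
        exact ENNReal.ofReal_le_ofReal (hC n)

lemma ProbabilityTheory.iIndepFun.indepFun_of_dependsOn {ι β γ : Type*} [Inhabited β]
    [MeasurableSpace β] [MeasurableSpace γ] {ξ : ι → Ω → β} (hindep : iIndepFun ξ μ)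
    (hmeas : ∀ i, Measurable (ξ i)) {g : (ι → β) → γ} (hg : Measurable g) {s : Finset ι}
    (hgs : DependsOn g s) {j : ι} (hj : j ∉ s) :
    IndepFun (fun ω => g (ξ · ω)) (ξ j) μ := by
  classical
  have h := (hindep.indepFun_finset s {j} (disjoint_singleton_right.2 hj) hmeas).comp
    (hg.comp (measurable_updateFinset (x := default)))
    (measurable_pi_apply ⟨j, mem_singleton_self j⟩)
  convert h using 1
  · exact funext fun ω => hgs fun i hi => by simp [updateFinset, Finset.mem_coe.1 hi]
  · rfl

lemma ProbabilityTheory.iIndepFun.identDistrib_precomp {ι β : Type*} [Countable ι]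
    [MeasurableSpace β] {ξ : ι → Ω → β} (hindep : iIndepFun ξ μ)
    (hident : ∀ i j, IdentDistrib (ξ i) (ξ j) μ μ) {e : ι → ι} (he : Injective e) :
    IdentDistrib (fun ω i => ξ (e i) ω) (fun ω i => ξ i ω) μ μ :=
  IdentDistrib.pi (fun i => hident (e i) i) (hindep.precomp he) hindep

lemma integral_sq_max_add_le [IsFiniteMeasure μ] {V X : Ω → ℝ} (hVX : IndepFun V X μ)
    (hV : MemLp V 2 μ) (hX : MemLp X 2 μ) :
    ∫ ω, max (V ω + X ω) 0 ^ 2 ∂μ ≤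
      ∫ ω, V ω ^ 2 ∂μ + 2 * (∫ ω, V ω ∂μ) * (∫ ω, X ω ∂μ) + ∫ ω, X ω ^ 2 ∂μ := by
  have hVX_int : Integrable (fun ω => 2 * (V ω * X ω)) μ := (hV.integrable_mul hX).const_mul 2
  calc ∫ ω, max (V ω + X ω) 0 ^ 2 ∂μ ≤ ∫ ω, (V ω + X ω) ^ 2 ∂μ :=
        integral_mono_of_nonneg (ae_of_all _ fun _ => sq_nonneg _) (hV.add hX).integrable_sq
          (ae_of_all _ fun ω => by
            rcases le_total (V ω + X ω) 0 with h | h <;> simp [h, sq_nonneg])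
    _ = ∫ ω, V ω ^ 2 + 2 * (V ω * X ω) + X ω ^ 2 ∂μ := by congr with ω; ring
    _ = _ := by
      rw [integral_add (f := fun ω => V ω ^ 2 + 2 * (V ω * X ω))
          (hV.integrable_sq.add hVX_int) hX.integrable_sq,
        integral_add hV.integrable_sq hVX_int, integral_const_mul,
        hVX.integral_fun_mul_eq_mul_integral hV.aestronglyMeasurable hX.aestronglyMeasurable,
        mul_assoc]

lemma memLp_lindley {p : ENNReal} {ξ : ℕ → Ω → ℝ} (hξ : ∀ n, MemLp (ξ n) p μ) (n : ℕ) :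
    MemLp (fun ω => lindley (ξ · ω) n) p μ := by
  induction n with
  | zero => exact MemLp.zero
  | succ n ih => exact (ih.add (hξ n)).pos_part

lemma identDistrib_lindley_partialSumMax {ξ : ℕ → Ω → ℝ} (hindep : iIndepFun ξ μ)
    (hident : ∀ i j, IdentDistrib (ξ i) (ξ j) μ μ) (n : ℕ) :
    IdentDistrib (fun ω => lindley (ξ · ω) n) (fun ω => partialSumMax (ξ · ω) n) μ μ := by
  convert (hindep.identDistrib_precomp hident (reflectBelow_injective n)).comp
    (measurable_partialSumMax n) using 1
  · exact funext fun ω => lindley_eq_partialSumMax _ n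
  · rfl

lemma memLp_partialSumMax {p : ENNReal} {ξ : ℕ → Ω → ℝ} (hindep : iIndepFun ξ μ)
    (hident : ∀ i j, IdentDistrib (ξ i) (ξ j) μ μ) (hL : MemLp (ξ 0) p μ) (n : ℕ) :
    MemLp (fun ω => partialSumMax (ξ · ω) n) p μ :=
  (identDistrib_lindley_partialSumMax hindep hident n).memLp_iff.1
    (memLp_lindley (fun i => (hident i 0).memLp_iff.2 hL) n)

lemma integral_partialSumMax_le [IsProbabilityMeasure μ] {ξ : ℕ → Ω → ℝ}
    (hmeas : ∀ n, Measurable (ξ n)) (hindep : iIndepFun ξ μ)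
    (hident : ∀ i j, IdentDistrib (ξ i) (ξ j) μ μ) (hL2 : MemLp (ξ 0) 2 μ)
    (hneg : ∫ ω, ξ 0 ω ∂μ < 0) (n : ℕ) :
    ∫ ω, partialSumMax (ξ · ω) n ∂μ ≤ (∫ ω, ξ 0 ω ^ 2 ∂μ) / (2 * -∫ ω, ξ 0 ω ∂μ) := by
  set V : ℕ → Ω → ℝ := fun n ω => lindley (ξ · ω) n
  set M : ℕ → Ω → ℝ := fun n ω => partialSumMax (ξ · ω) n
  have hξL2 (i : ℕ) : MemLp (ξ i) 2 μ := (hident i 0).memLp_iff.2 hL2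
  have hVM (n : ℕ) : IdentDistrib (V n) (M n) μ μ :=
    identDistrib_lindley_partialSumMax hindep hident n
  have hV2 (n : ℕ) : MemLp (V n) 2 μ := memLp_lindley hξL2 n
  have hM2 (n : ℕ) : MemLp (M n) 2 μ := memLp_partialSumMax hindep hident hL2 n
  have hindV : IndepFun (V n) (ξ n) μ :=
    hindep.indepFun_of_dependsOn hmeas (measurable_lindley n) (dependsOn_lindley n) (by simp)
  have key : 0 ≤ 2 * (∫ ω, M n ω ∂μ) * (∫ ω, ξ 0 ω ∂μ) + ∫ ω, ξ 0 ω ^ 2 ∂μ := by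
    have hstep : ∫ ω, V n ω ^ 2 ∂μ ≤
        ∫ ω, V n ω ^ 2 ∂μ + 2 * (∫ ω, V n ω ∂μ) * (∫ ω, ξ n ω ∂μ) + ∫ ω, ξ n ω ^ 2 ∂μ :=
      calc ∫ ω, V n ω ^ 2 ∂μ = ∫ ω, M n ω ^ 2 ∂μ := (hVM n).sq.integral_eq
        _ ≤ ∫ ω, M (n + 1) ω ^ 2 ∂μ :=
          integral_mono (hM2 n).integrable_sq (hM2 (n + 1)).integrable_sq fun ω =>
            pow_le_pow_left₀ (partialSumMax_nonneg _ n) (partialSumMax_mono _ n.le_succ) 2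
        _ = ∫ ω, V (n + 1) ω ^ 2 ∂μ := (hVM (n + 1)).sq.integral_eq.symm
        _ ≤ _ := integral_sq_max_add_le hindV (hV2 n) (hξL2 n)
    rwa [(hVM n).integral_eq, (hident n 0).integral_eq, (hident n 0).sq.integral_eq,
      add_assoc, le_add_iff_nonneg_right] at hstep
  rw [le_div_iff₀ (by linarith)]
  linarith

end

theorem integrable_sup_random_walk_negative_drift_general {Ω : Type*} [MeasurableSpace Ω]
    (μ : Measure Ω) [IsProbabilityMeasure μ] (ξ : ℕ → Ω → ℝ)
    (hmeas : ∀ n, Measurable (ξ n))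
    (hindep : iIndepFun ξ μ)
    (hident : ∀ n, μ.map (ξ n) = μ.map (ξ 0))
    (hneg : ∫ ω, ξ 0 ω ∂μ < 0)
    (hsq : Integrable (fun ω => (ξ 0 ω) ^ 2) μ) :
    Integrable (fun ω => ⨆ n : ℕ, ∑ i ∈ Finset.range n, ξ i ω) μ := by
  have hident' (i j : ℕ) : IdentDistrib (ξ i) (ξ j) μ μ :=
    ⟨(hmeas i).aemeasurable, (hmeas j).aemeasurable, (hident i).trans (hident j).symm⟩
  have hL2 : MemLp (ξ 0) 2 μ :=
    (memLp_two_iff_integrable_sq (hmeas 0).aestronglyMeasurable).2 hsq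
  simp_rw [← iSup_partialSumMax]
  exact integrable_iSup_of_monotone
    (fun n => (measurable_partialSumMax n).comp (measurable_pi_lambda _ hmeas))
    (fun n ω => partialSumMax_nonneg _ n) (fun ω => partialSumMax_mono _)
    (fun n => (memLp_partialSumMax hindep hident' hL2 n).integrable one_le_two)
    (integral_partialSumMax_le hmeas hindep hident' hL2 hneg)

/-- Kiefer–Wolfowitz: for an i.i.d. sequence `(ξₙ)` with negative mean and finite
second moment, the supremum of the random walk `Zₙ = ξ₁ + ⋯ + ξₙ` is integrable. -/
theorem integrable_sup_random_walk_negative_drift {Ω : Type*} [MeasurableSpace Ω]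
    (μ : Measure Ω) [IsProbabilityMeasure μ] (ξ : ℕ → Ω → ℝ)
    (hmeas : ∀ n, Measurable (ξ n))
    (hindep : iIndepFun ξ μ)
    (hident : ∀ n, μ.map (ξ n) = μ.map (ξ 0))
    (hint : Integrable (ξ 0) μ)
    (hneg : ∫ ω, ξ 0 ω ∂μ < 0)
    (hsq : Integrable (fun ω => (ξ 0 ω) ^ 2) μ) :
    Integrable (fun ω => ⨆ n : ℕ, ∑ i ∈ Finset.range n, ξ i ω) μ :=
  integrable_sup_random_walk_negative_drift_general μ ξ hmeas hindep hident hneg hsq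
end
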